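/- arXiv:1906.04665 — 10 statements merged into one kernel-verified Lean document; each statement's English description precedes it below -/
import Mathlib

section
/- Let k be an algebraically closed field of characteristic 2 and let S = k[v,w]/(w^2 + v^2·w + v). Then the map Φ: S → R_0 := k[x, z, (z+1)^{-1}]/(z + z^2 + x^3) defined by v ↦ x^2/(z+1), w ↦ x/(z+1) is a well-defined isomorphism of k-algebras. -/
open MvPolynomial

/-- Over an algebraically closed field `k` of characteristic 2, the map
`Φ : S = k[v,w]/(w² + v²w + v) → R₀ = k[x,z,(z+1)⁻¹]/(z + z² + x³)` given by
`v ↦ x²/(z+1)`, `w ↦ x/(z+1)` is a well-defined isomorphism of `k`-algebras.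
Here `R₀` is modelled as `k[x,z,t]/(z + z² + x³, t·(z+1) - 1)` with `t = (z+1)⁻¹`,
and `S` as `k[v,w]/(w² + v²·w + v)` with `v = X 0`, `w = X 1`. -/
theorem stmt0 (k : Type*) [Field k] [IsAlgClosed k] [CharP k 2]
    (IS : Ideal (MvPolynomial (Fin 2) k))
    (hIS : IS = Ideal.span {(X 1)^2 + (X 0)^2 * X 1 + X 0})
    (IR : Ideal (MvPolynomial (Fin 3) k))
    (hIR : IR = Ideal.span
      {X 1 + (X 1)^2 + (X 0)^3, X 2 * (X 1 + 1) - 1}) :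
    ∃ Φ : (MvPolynomial (Fin 2) k ⧸ IS) →ₐ[k] (MvPolynomial (Fin 3) k ⧸ IR),
      Function.Bijective Φ ∧
      Φ (Ideal.Quotient.mk IS (X 0)) = Ideal.Quotient.mk IR ((X 0)^2 * X 2) ∧
      Φ (Ideal.Quotient.mk IS (X 1)) = Ideal.Quotient.mk IR (X 0 * X 2) := by
  have h2S : (2 : MvPolynomial (Fin 2) k) = 0 := by
    exact_mod_cast CharP.cast_eq_zero (MvPolynomial (Fin 2) k) 2
  have h2R : (2 : MvPolynomial (Fin 3) k) = 0 := by
    exact_mod_cast CharP.cast_eq_zero (MvPolynomial (Fin 3) k) 2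
  -- forward polynomial map: v ↦ x²t, w ↦ xt
  set φ : MvPolynomial (Fin 2) k →ₐ[k] (MvPolynomial (Fin 3) k ⧸ IR) :=
    (Ideal.Quotient.mkₐ k IR).comp (aeval ![(X 0)^2 * X 2, X 0 * X 2]) with hφdef
  -- backward polynomial map: x ↦ w+v², z ↦ vw+v³, t ↦ vw+1
  set ψ : MvPolynomial (Fin 3) k →ₐ[k] (MvPolynomial (Fin 2) k ⧸ IS) :=
    (Ideal.Quotient.mkₐ k IS).comp
      (aeval ![X 1 + (X 0)^2, X 0 * X 1 + (X 0)^3, X 0 * X 1 + 1]) with hψdef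
  have hφ0 : ∀ a ∈ IS, φ a = 0 := by
    intro a ha
    rw [hIS] at ha
    have hker : Ideal.span {(X 1:MvPolynomial (Fin 2) k)^2 + (X 0)^2 * X 1 + X 0}
        ≤ RingHom.ker φ.toRingHom := by
      rw [Ideal.span_le]
      rintro p hp
      rw [Set.mem_singleton_iff] at hp
      subst hp
      rw [SetLike.mem_coe, RingHom.mem_ker]
      show φ _ = 0
      rw [hφdef, AlgHom.comp_apply,
        Ideal.Quotient.mkₐ_eq_mk, Ideal.Quotient.eq_zero_iff_mem, hIR,
        Ideal.mem_span_pair]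
      refine ⟨(X 0)^2 * (X 2)^3, (X 0)^2 * X 2 + (X 0)^2 * X 1 * (X 2)^2, ?_⟩
      simp only [map_add, map_mul, map_pow, aeval_X, Matrix.cons_val_zero,
        Matrix.cons_val_one, Matrix.head_cons]
      linear_combination (-(X 0:MvPolynomial (Fin 3) k)^2 * X 2
        + (X 0)^2 * X 1 * (X 2)^3 + (X 0)^2 * (X 1)^2 * (X 2)^3) * h2R
    exact hker ha
  have hψ0 : ∀ a ∈ IR, ψ a = 0 := by
    intro a ha
    rw [hIR] at ha
    have hker : Ideal.span {X 1 + (X 1:MvPolynomial (Fin 3) k)^2 + (X 0)^3,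
        X 2 * (X 1 + 1) - 1} ≤ RingHom.ker ψ.toRingHom := by
      rw [Ideal.span_le]
      rintro p hp
      rw [SetLike.mem_coe, RingHom.mem_ker]
      show ψ _ = 0
      rw [hψdef, AlgHom.comp_apply,
        Ideal.Quotient.mkₐ_eq_mk, Ideal.Quotient.eq_zero_iff_mem, hIS,
        Ideal.mem_span_singleton]
      simp only [Set.mem_insert_iff, Set.mem_singleton_iff] at hp
      rcases hp with rfl | rfl
      · refine ⟨X 1 + (X 0)^2, ?_⟩
        simp only [map_add, map_mul, map_pow, map_one, map_sub, aeval_X,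
          Matrix.cons_val_zero, Matrix.cons_val_one, Matrix.head_cons,
          Matrix.cons_val_two, Matrix.tail_cons]
        linear_combination ((X 0:MvPolynomial (Fin 2) k)^2 * (X 1)^2
          + 2 * (X 0)^4 * X 1 + (X 0)^6) * h2S
      · refine ⟨(X 0)^2, ?_⟩
        simp only [map_add, map_mul, map_pow, map_one, map_sub, aeval_X,
          Matrix.cons_val_zero, Matrix.cons_val_one, Matrix.head_cons,
          Matrix.cons_val_two, Matrix.tail_cons]
        linear_combination ((X 0:MvPolynomial (Fin 2) k) * X 1) * h2S
    exact hker ha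
  set Φ := Ideal.Quotient.liftₐ IS φ hφ0 with hΦdef
  set Ψ := Ideal.Quotient.liftₐ IR ψ hψ0 with hΨdef
  have key : ∀ a : MvPolynomial (Fin 2) k, Φ (Ideal.Quotient.mk IS a)
      = Ideal.Quotient.mk IR (aeval ![(X 0)^2 * X 2, X 0 * X 2] a) := by
    intro a
    rw [hΦdef]; show φ a = _; rw [hφdef]
    simp only [AlgHom.toRingHom_eq_coe, RingHom.coe_coe, AlgHom.coe_comp,
      Function.comp_apply, Ideal.Quotient.mkₐ_eq_mk]
  have keyΨ : ∀ a : MvPolynomial (Fin 3) k, Ψ (Ideal.Quotient.mk IR a)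
      = Ideal.Quotient.mk IS
        (aeval ![X 1 + (X 0)^2, X 0 * X 1 + (X 0)^3, X 0 * X 1 + 1] a) := by
    intro a
    rw [hΨdef]; show ψ a = _; rw [hψdef]
    simp only [AlgHom.toRingHom_eq_coe, RingHom.coe_coe, AlgHom.coe_comp,
      Function.comp_apply, Ideal.Quotient.mkₐ_eq_mk]
  have hcomp1 : Φ.comp Ψ = AlgHom.id k _ := by
    apply Ideal.Quotient.algHom_ext
    apply MvPolynomial.algHom_ext
    intro i
    simp only [AlgHom.comp_apply, Ideal.Quotient.mkₐ_eq_mk, AlgHom.id_apply]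
    rw [keyΨ, key, Ideal.Quotient.eq, hIR, Ideal.mem_span_pair]
    fin_cases i
    · refine ⟨X 0 * (X 2)^2, X 0 + X 0 * X 1 * X 2, ?_⟩
      simp only [map_add, map_mul, map_pow, map_one, aeval_X, Fin.zero_eta, Fin.mk_one, Fin.reduceFinMk, Fin.isValue, Matrix.cons_val_zero,
        Matrix.cons_val_one, Matrix.head_cons, Matrix.cons_val_two, Matrix.tail_cons]
      linear_combination ((X 0:MvPolynomial (Fin 3) k) * X 1 * (X 2)^2
        + X 0 * (X 1)^2 * (X 2)^2) * h2R
    · refine ⟨(X 2)^2 + X 1 * (X 2)^3 + (X 1)^2 * (X 2)^3 + (X 0)^3 * (X 2)^3,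
        X 1 + X 1 * X 2 + (X 1)^2 * X 2 + (X 1)^2 * (X 2)^2 + (X 1)^3 * (X 2)^2, ?_⟩
      simp only [map_add, map_mul, map_pow, map_one, aeval_X, Fin.zero_eta, Fin.mk_one, Fin.reduceFinMk, Fin.isValue, Matrix.cons_val_zero,
        Matrix.cons_val_one, Matrix.head_cons, Matrix.cons_val_two, Matrix.tail_cons]
      linear_combination ((X 1:MvPolynomial (Fin 3) k) * (X 2)^2
        + (X 1)^2 * (X 2)^2 + (X 1)^2 * (X 2)^3 + 2 * (X 1)^3 * (X 2)^3
        + (X 1)^4 * (X 2)^3 + (X 0)^3 * X 1 * (X 2)^3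
        + (X 0)^3 * (X 1)^2 * (X 2)^3) * h2R
    · refine ⟨(X 2)^2, 1 + X 1 * X 2, ?_⟩
      simp only [map_add, map_mul, map_pow, map_one, aeval_X, Fin.zero_eta, Fin.mk_one, Fin.reduceFinMk, Fin.isValue, Matrix.cons_val_zero,
        Matrix.cons_val_one, Matrix.head_cons, Matrix.cons_val_two, Matrix.tail_cons]
      linear_combination (-(1:MvPolynomial (Fin 3) k) + X 2 + X 1 * (X 2)^2
        + (X 1)^2 * (X 2)^2) * h2R
  have hcomp2 : Ψ.comp Φ = AlgHom.id k _ := by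
    apply Ideal.Quotient.algHom_ext
    apply MvPolynomial.algHom_ext
    intro i
    simp only [AlgHom.comp_apply, Ideal.Quotient.mkₐ_eq_mk, AlgHom.id_apply]
    rw [key, keyΨ, Ideal.Quotient.eq, hIS, Ideal.mem_span_singleton]
    fin_cases i
    · refine ⟨1 + X 0 * X 1 + (X 0)^3, ?_⟩
      simp only [map_add, map_mul, map_pow, map_one, aeval_X, Fin.zero_eta, Fin.mk_one, Fin.reduceFinMk, Fin.isValue, Matrix.cons_val_zero,
        Matrix.cons_val_one, Matrix.head_cons, Matrix.cons_val_two, Matrix.tail_cons]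
      linear_combination (-(X 0:MvPolynomial (Fin 2) k)) * h2S
    · refine ⟨X 0, ?_⟩
      simp only [map_add, map_mul, map_pow, map_one, aeval_X, Fin.zero_eta, Fin.mk_one, Fin.reduceFinMk, Fin.isValue, Matrix.cons_val_zero,
        Matrix.cons_val_one, Matrix.head_cons, Matrix.cons_val_two, Matrix.tail_cons]
      ring
  refine ⟨Φ, ?_, ?_, ?_⟩
  · exact (AlgEquiv.ofAlgHom Φ Ψ hcomp1 hcomp2).bijective
  · rw [key]
    simp
  · rw [key]
    simp
end

section
/- Let k be an algebraically closed field of characteristic 2 and S = k[v,w]/(w^2 + v^2 w + v), with the k-algebra involution ι on the fraction field induced via the isomorphism with R_0 = k[x,z,(z+1)^{-1}]/(z+z^2+x^3) carrying the map x ↦ x/(z+1), z ↦ z/(z+1). Then ι(v) = v and ι(w) = w + v^2. -/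
/-!
Write `x, z, t` for the classes of the variables of `R₀`, so `t = (z+1)⁻¹`, `Φ v = x²t`,
`Φ w = xt`, `ι* x = xt`, `ι* t = z+1`. Then `ι*(x²t) = x²t²(z+1) = x²t`, and
`ι*(xt) = xt(z+1) = x`, while `xt + (x²t)² = xt(1 + x³t) = xt(1 + z)` because
`x³ = z + z²` in characteristic 2.
-/

open MvPolynomial

section CurveAlgebra

variable {A : Type*} [CommRing A] {x z t : A}

theorem sq_mul_mul_eq_of_mul_eq_one (ht : t * (z + 1) = 1) :
    (x * t) ^ 2 * (z + 1) = x ^ 2 * t := by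
  linear_combination x ^ 2 * t * ht

theorem mul_mul_eq_add_sq_of_mul_eq_one (h2 : (2 : A) = 0) (hcurve : z + z ^ 2 + x ^ 3 = 0)
    (ht : t * (z + 1) = 1) :
    x * t * (z + 1) = x * t + (x ^ 2 * t) ^ 2 := by
  linear_combination x * t * z * h2 - x * t ^ 2 * hcurve + x * t * z * ht

end CurveAlgebra

theorem stmt2_general (k : Type*) [Field k] [CharP k 2]
    (IS : Ideal (MvPolynomial (Fin 2) k))
    (IR : Ideal (MvPolynomial (Fin 3) k))
    (hIR : IR = Ideal.span {X 1 + (X 1)^2 + (X 0)^3, X 2 * (X 1 + 1) - 1})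
    (Φ : (MvPolynomial (Fin 2) k ⧸ IS) →ₐ[k] (MvPolynomial (Fin 3) k ⧸ IR))
    (hΦv : Φ (Ideal.Quotient.mk IS (X 0)) = Ideal.Quotient.mk IR ((X 0)^2 * X 2))
    (hΦw : Φ (Ideal.Quotient.mk IS (X 1)) = Ideal.Quotient.mk IR (X 0 * X 2))
    (ι : (MvPolynomial (Fin 3) k ⧸ IR) →ₐ[k] (MvPolynomial (Fin 3) k ⧸ IR))
    (hιx : ι (Ideal.Quotient.mk IR (X 0)) = Ideal.Quotient.mk IR (X 0 * X 2))
    (hιt : ι (Ideal.Quotient.mk IR (X 2)) = Ideal.Quotient.mk IR (X 1 + 1)) :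
    ι (Φ (Ideal.Quotient.mk IS (X 0))) = Φ (Ideal.Quotient.mk IS (X 0)) ∧
    ι (Φ (Ideal.Quotient.mk IS (X 1))) = Φ (Ideal.Quotient.mk IS (X 1 + (X 0)^2)) := by
  have hcurve : Ideal.Quotient.mk IR (X 1 + (X 1)^2 + (X 0)^3) = 0 :=
    Ideal.Quotient.eq_zero_iff_mem.2 (hIR ▸ Ideal.subset_span (by simp))
  have ht : Ideal.Quotient.mk IR (X 2 * (X 1 + 1) - 1) = 0 :=
    Ideal.Quotient.eq_zero_iff_mem.2 (hIR ▸ Ideal.subset_span (by simp))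
  have h2 : (2 : MvPolynomial (Fin 3) k ⧸ IR) = 0 := by
    rw [← map_ofNat (algebraMap k _) 2, CharTwo.two_eq_zero, map_zero]
  simp only [map_add, map_sub, map_mul, map_pow, map_one] at hcurve ht hΦv hΦw hιx hιt ⊢
  rw [hΦv, hΦw, map_mul, map_pow, map_mul, hιx, hιt]
  exact ⟨sq_mul_mul_eq_of_mul_eq_one (sub_eq_zero.1 ht),
    mul_mul_eq_add_sq_of_mul_eq_one h2 hcurve (sub_eq_zero.1 ht)⟩

/-- With `S = k[v,w]/(w² + v²w + v)` and
`R₀ = k[x,z,(z+1)⁻¹]/(z + z² + x³)` (modelled with `t = (z+1)⁻¹` as a third variable),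
let `Φ : S → R₀` be the isomorphism `v ↦ x²/(z+1)`, `w ↦ x/(z+1)`, and let
`ι* : R₀ → R₀` be the involution `x ↦ x/(z+1)`, `z ↦ z/(z+1)`, `(z+1)⁻¹ ↦ z+1`.
Then the induced involution `ι = Φ⁻¹ ∘ ι* ∘ Φ` on `S` satisfies `ι(v) = v` and
`ι(w) = w + v²`; equivalently `ι*(Φ(v)) = Φ(v)` and `ι*(Φ(w)) = Φ(w + v²)`. -/
theorem stmt2 (k : Type*) [Field k] [IsAlgClosed k] [CharP k 2]
    (IS : Ideal (MvPolynomial (Fin 2) k))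
    (hIS : IS = Ideal.span {(X 1)^2 + (X 0)^2 * X 1 + X 0})
    (IR : Ideal (MvPolynomial (Fin 3) k))
    (hIR : IR = Ideal.span {X 1 + (X 1)^2 + (X 0)^3, X 2 * (X 1 + 1) - 1})
    (Φ : (MvPolynomial (Fin 2) k ⧸ IS) →ₐ[k] (MvPolynomial (Fin 3) k ⧸ IR))
    (hbij : Function.Bijective Φ)
    (hΦv : Φ (Ideal.Quotient.mk IS (X 0)) = Ideal.Quotient.mk IR ((X 0)^2 * X 2))
    (hΦw : Φ (Ideal.Quotient.mk IS (X 1)) = Ideal.Quotient.mk IR (X 0 * X 2))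
    (ι : (MvPolynomial (Fin 3) k ⧸ IR) →ₐ[k] (MvPolynomial (Fin 3) k ⧸ IR))
    (hιx : ι (Ideal.Quotient.mk IR (X 0)) = Ideal.Quotient.mk IR (X 0 * X 2))
    (hιz : ι (Ideal.Quotient.mk IR (X 1)) = Ideal.Quotient.mk IR (X 1 * X 2))
    (hιt : ι (Ideal.Quotient.mk IR (X 2)) = Ideal.Quotient.mk IR (X 1 + 1)) :
    ι (Φ (Ideal.Quotient.mk IS (X 0))) = Φ (Ideal.Quotient.mk IS (X 0)) ∧
    ι (Φ (Ideal.Quotient.mk IS (X 1))) = Φ (Ideal.Quotient.mk IS (X 1 + (X 0)^2)) :=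
  stmt2_general k IS IR hIR Φ hΦv hΦw ι hιx hιt
end

section
/- Let k be a field of characteristic p > 0, S, I as above (f_i = B_i^p − A_i^{(p−1)e_i} B_i + P_i(A_i)). If h ∈ I satisfies deg_{B_i}(h) ≤ p−1 for all i, then h = 0. -/
open MvPolynomial

open MvPolynomial

lemma aux_grid {K : Type*} [CommRing K] [IsDomain K] :
    ∀ (n : ℕ) (h : MvPolynomial (Fin n) K) (T : Fin n → Finset K),
      (∀ i, degreeOf i h < (T i).card) →
      (∀ x : Fin n → K, (∀ i, x i ∈ T i) → eval x h = 0) → h = 0 := by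
  intro n
  induction n with
  | zero =>
    intro h T _ hev
    obtain ⟨c, rfl⟩ := C_surjective (Fin 0) h
    have h0 : eval (fun i : Fin 0 => i.elim0) (C c : MvPolynomial (Fin 0) K) = 0 :=
      hev _ (fun i => i.elim0)
    rw [eval_C] at h0
    rw [h0, map_zero]
  | succ n ih =>
    intro h T hdeg hev
    have hq : ∀ m : ℕ, ((finSuccEquiv K n) h).coeff m = 0 := by
      intro m
      apply ih _ (fun j => T j.succ)
      · intro j
        exact lt_of_le_of_lt (degreeOf_coeff_finSuccEquiv h j m) (hdeg j.succ)
      · intro y hy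
        have hr : (Polynomial.map (eval y) ((finSuccEquiv K n) h)) = 0 := by
          apply Polynomial.eq_zero_of_natDegree_lt_card_of_eval_eq_zero' _ (T 0)
          · intro a ha
            rw [← eval_eq_eval_mv_eval']
            apply hev
            intro i
            refine Fin.cases ?_ ?_ i
            · simpa using ha
            · intro j; simpa using hy j
          · calc (Polynomial.map (eval y) ((finSuccEquiv K n) h)).natDegree
                ≤ ((finSuccEquiv K n) h).natDegree := Polynomial.natDegree_map_le
              _ = degreeOf 0 h := natDegree_finSuccEquiv h
              _ < (T 0).card := hdeg 0
        have := congrArg (fun q => Polynomial.coeff q m) hr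
        simpa [Polynomial.coeff_map] using this
    apply (finSuccEquiv K n).injective
    rw [map_zero]
    exact Polynomial.ext fun m => by simp [hq m]

lemma aux_roots {K : Type*} [Field K] [IsAlgClosed K] {p : ℕ} (hp : p.Prime) [CharP K p]
    (c d : K) (hc : c ≠ 0) :
    ∃ T : Finset K, T.card = p ∧ ∀ b ∈ T, b ^ p - c * b + d = 0 := by
  classical
  set Q : Polynomial K :=
    Polynomial.X ^ p + (Polynomial.C (-c) * Polynomial.X + Polynomial.C d) with hQ
  have hdeglt : (Polynomial.C (-c) * Polynomial.X + Polynomial.C d).degree < ((p : ℕ) : WithBot ℕ) := by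
    refine lt_of_le_of_lt (Polynomial.degree_linear_le) ?_
    exact_mod_cast hp.one_lt
  have hmono : Q.Monic := Polynomial.monic_X_pow_add hdeglt
  have hQdeg : Q.degree = p := by
    rw [hQ, Polynomial.degree_add_eq_left_of_degree_lt (by rwa [Polynomial.degree_X_pow]),
      Polynomial.degree_X_pow]
  have hQnat : Q.natDegree = p := Polynomial.natDegree_eq_of_degree_eq_some hQdeg
  have hQne : Q ≠ 0 := hmono.ne_zero
  have hder : Polynomial.derivative Q = Polynomial.C (-c) := by
    simp [hQ, Polynomial.derivative_X_pow, CharP.cast_eq_zero K p]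
  have hsep : Q.Separable := by
    rw [Polynomial.separable_def, hder]
    exact ⟨0, Polynomial.C ((-c)⁻¹), by
      rw [zero_mul, zero_add, ← Polynomial.C_mul, inv_mul_cancel₀ (neg_ne_zero.mpr hc),
        Polynomial.C_1]⟩
  refine ⟨Q.roots.toFinset, ?_, ?_⟩
  · rw [Multiset.toFinset_card_of_nodup (Polynomial.nodup_roots hsep),
      ← hQnat, ← Polynomial.splits_iff_card_roots]
    exact IsAlgClosed.splits Q
  · intro b hb
    have hroot : Polynomial.eval b Q = 0 :=
      ((Polynomial.mem_roots').mp (Multiset.mem_toFinset.mp hb)).2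
    rw [hQ] at hroot
    simp only [Polynomial.eval_add, Polynomial.eval_pow, Polynomial.eval_X,
      Polynomial.eval_mul, Polynomial.eval_C, Polynomial.eval_neg] at hroot
    linear_combination hroot

def boolSum (g : ℕ) : Fin g × Bool ≃ (Fin g ⊕ Fin g) where
  toFun v := cond v.2 (Sum.inl v.1) (Sum.inr v.1)
  invFun s := Sum.elim (fun i => (i, true)) (fun i => (i, false)) s
  left_inv := by rintro ⟨i, (_ | _)⟩ <;> rfl
  right_inv := by rintro (i | i) <;> rfl

@[simp] lemma boolSum_true (g : ℕ) (i : Fin g) : boolSum g (i, true) = Sum.inl i := rfl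
@[simp] lemma boolSum_false (g : ℕ) (i : Fin g) : boolSum g (i, false) = Sum.inr i := rfl

lemma aux_deg {k K : Type*} [CommSemiring k] [CommSemiring K] [Nontrivial K] {g : ℕ}
    (ι0 : k →+* K) (α : Fin g → K) (h : MvPolynomial (Fin g × Bool) k) (i : Fin g) :
    degreeOf i (eval₂ ((C : K →+* MvPolynomial (Fin g) K).comp ι0)
      (fun v : Fin g × Bool => if v.2 then X v.1 else C (α v.1)) h)
      ≤ degreeOf (i, true) h := by
  classical
  rw [eval₂_eq]
  refine le_trans (degreeOf_sum_le _ _ _) ?_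
  rw [Finset.sup_le_iff]
  intro m hm
  refine le_trans (degreeOf_mul_le _ _ _) ?_
  rw [RingHom.comp_apply, degreeOf_C, zero_add]
  refine le_trans (degreeOf_prod_le _ _ _) ?_
  have step : ∀ v ∈ m.support,
      degreeOf i ((if v.2 then (X v.1 : MvPolynomial (Fin g) K) else C (α v.1)) ^ m v)
        ≤ if v = (i, true) then m v else 0 := by
    intro v _
    refine le_trans (degreeOf_pow_le _ _ _) ?_
    by_cases hv : v = (i, true)
    · subst hv
      simp [degreeOf_X]
    · rcases v with ⟨j, b⟩
      cases b
      · simp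
      · have hj : i ≠ j := by rintro rfl; exact hv rfl
        simp [degreeOf_X, hj, (Ne.symm hj)]
  refine le_trans (Finset.sum_le_sum step) ?_
  rw [Finset.sum_ite_eq' m.support (i, true) (fun v => m v)]
  split_ifs with hmem
  · exact monomial_le_degreeOf _ hm
  · exact Nat.zero_le _

lemma aux_main {k K : Type*} [Field k] [Field K] [IsAlgClosed K] {p : ℕ} (hp : p.Prime)
    [CharP k p] [CharP K p] {g : ℕ}
    (ι : MvPolynomial (Fin g) k →+* K) (hι : Function.Injective ι)
    (e : Fin g → ℕ) (P : Fin g → Polynomial k)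
    (f : Fin g → MvPolynomial (Fin g × Bool) k)
    (hf : ∀ i, f i = (X (i, true)) ^ p
      - (X (i, false)) ^ ((p - 1) * e i) * X (i, true)
      + Polynomial.aeval (X (i, false)) (P i))
    (h : MvPolynomial (Fin g × Bool) k)
    (hmem : h ∈ Ideal.span (Set.range f))
    (hdeg : ∀ i : Fin g, degreeOf (i, true) h ≤ p - 1) : h = 0 := by
  classical
  set ι0 : k →+* K := ι.comp (C : k →+* MvPolynomial (Fin g) k) with hι0def
  set α : Fin g → K := fun i => ι (X i) with hαdef
  have hα : ∀ i, α i ≠ 0 := by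
    intro i hzero
    have : (X i : MvPolynomial (Fin g) k) = 0 := hι (by simpa using hzero)
    exact MvPolynomial.X_ne_zero i this
  -- roots
  have hrt := fun i => aux_roots hp (α i ^ ((p - 1) * e i))
    (Polynomial.eval₂ ι0 (α i) (P i)) (pow_ne_zero _ (hα i))
  choose T hTcard hTroot using hrt
  -- the coefficient-extension homomorphism
  set G : Fin g × Bool → MvPolynomial (Fin g) K :=
    fun v => if v.2 then X v.1 else C (α v.1) with hGdef
  set φ : MvPolynomial (Fin g × Bool) k →+* MvPolynomial (Fin g) K :=
    eval₂Hom ((C : K →+* MvPolynomial (Fin g) K).comp ι0) G with hφdef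
  have hφeq : φ = (MvPolynomial.map ι).comp ((sumToIter k (Fin g) (Fin g)).comp
      (rename (boolSum g)).toRingHom) := by
    apply ringHom_ext
    · intro a
      simp [hφdef, hι0def, RingHom.comp_apply, sumToIter_C]
    · rintro ⟨i, (_ | _)⟩
      · simp [hφdef, hGdef, hαdef, RingHom.comp_apply, rename_X, sumToIter_Xr]
      · simp [hφdef, hGdef, RingHom.comp_apply, rename_X, sumToIter_Xl]
  have hφinj : Function.Injective φ := by
    rw [hφeq]
    rw [RingHom.coe_comp, RingHom.coe_comp]
    refine (map_injective ι hι).comp (Function.Injective.comp ?_ ?_)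
    · have e : sumToIter k (Fin g) (Fin g) = (sumRingEquiv k (Fin g) (Fin g)).toRingHom :=
        ringHom_ext (fun a => by simp [sumToIter_C])
          (fun v => by cases v <;> simp [sumToIter_Xl, sumToIter_Xr])
      exact fun a b hab => (sumRingEquiv k (Fin g) (Fin g)).injective (by rw [e] at hab; exact hab)
    · simpa using rename_injective (R := k) (⇑(boolSum g)) (boolSum g).injective
  -- φ h vanishes on the grid
  have hφh : φ h = 0 := by
    apply aux_grid g (φ h) T
    · intro i
      calc degreeOf i (φ h) ≤ degreeOf (i, true) h := aux_deg ι0 α h i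
        _ ≤ p - 1 := hdeg i
        _ < p := by have := hp.two_le; omega
        _ = (T i).card := (hTcard i).symm
    · intro x hx
      -- the full evaluation homomorphism
      set Ex : MvPolynomial (Fin g × Bool) k →+* K :=
        eval₂Hom ι0 (fun v => if v.2 then x v.1 else α v.1) with hExdef
      have hcomp : (MvPolynomial.eval x).comp φ = Ex := by
        apply ringHom_ext
        · intro a
          simp [hφdef, hExdef, RingHom.comp_apply]
        · rintro ⟨i, (_ | _)⟩ <;>
            simp [hφdef, hGdef, hExdef, RingHom.comp_apply]
      have hEf : ∀ i, Ex (f i) = 0 := by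
        intro i
        have haev : Ex (Polynomial.aeval (X ((i : Fin g), false)) (P i))
            = Polynomial.eval₂ ι0 (α i) (P i) := by
          rw [Polynomial.aeval_def, Polynomial.hom_eval₂]
          congr 1
          · refine RingHom.ext fun a => ?_
            simp [hExdef, MvPolynomial.algebraMap_eq]
          · simp [hExdef]
        rw [hf i, map_add, map_sub, map_pow, map_mul, map_pow, haev]
        simp only [hExdef, coe_eval₂Hom, eval₂_X]
        simp only [if_pos, if_neg, Bool.false_eq_true, if_false, if_true]
        have hr := hTroot i (x i) (hx i)
        linear_combination hr
      have hker : Ideal.span (Set.range f) ≤ RingHom.ker Ex := by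
        rw [Ideal.span_le]
        rintro _ ⟨i, rfl⟩
        exact hEf i
      have hEh : Ex h = 0 := hker hmem
      calc eval x (φ h) = Ex h := by rw [← hcomp]; rfl
        _ = 0 := hEh
  exact hφinj (by simpa using hφh)

/-- With `S = k[A₁,B₁,…,A_g,B_g]` and `I = (f₁,…,f_g)` where
`fᵢ = Bᵢ^p − Aᵢ^{(p−1)eᵢ}Bᵢ + Pᵢ(Aᵢ)`, `Pᵢ ∈ Aᵢ·k[Aᵢ]`: if `h ∈ I` satisfies
`deg_{Bᵢ}(h) ≤ p − 1` for all `i`, then `h = 0`.  Variables: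
`X (i, false) = Aᵢ`, `X (i, true) = Bᵢ`. -/
theorem stmt6 (k : Type*) [Field k] (p : ℕ) [Fact p.Prime] [CharP k p]
    (g : ℕ) (e : Fin g → ℕ) (he : ∀ i, 1 ≤ e i)
    (P : Fin g → Polynomial k) (hP : ∀ i, Polynomial.X ∣ P i)
    (f : Fin g → MvPolynomial (Fin g × Bool) k)
    (hf : ∀ i, f i = (X (i, true)) ^ p
      - (X (i, false)) ^ ((p - 1) * e i) * X (i, true)
      + Polynomial.aeval (X (i, false)) (P i))
    (I : Ideal (MvPolynomial (Fin g × Bool) k))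
    (hI : I = Ideal.span (Set.range f))
    (h : MvPolynomial (Fin g × Bool) k) (hmem : h ∈ I)
    (hdeg : ∀ i : Fin g, degreeOf (i, true) h ≤ p - 1) :
    h = 0 := by
  subst hI
  set R := MvPolynomial (Fin g) k with hRdef
  set K := AlgebraicClosure (FractionRing R) with hKdef
  set ι : R →+* K := (algebraMap (FractionRing R) K).comp (algebraMap R (FractionRing R))
    with hιdef
  have hι : Function.Injective ι :=
    (algebraMap (FractionRing R) K).injective.comp (IsFractionRing.injective R (FractionRing R))
  haveI : CharP K p := by
    have hinj : Function.Injective ⇑(ι.comp (C : k →+* R)) := by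
      rw [RingHom.coe_comp]
      exact hι.comp (MvPolynomial.C_injective (Fin g) k)
    exact charP_of_injective_ringHom hinj p
  exact aux_main (Fact.out : p.Prime) ι hι e P f hf h hmem hdeg
end

section
/- In S = 𝔽_2[X,Y], there do not exist polynomials g(X,Y) ∈ S and h ∈ 𝔽_2[T] such that X = h(XY) + (X+Y)·g(X,Y). -/
open MvPolynomial

/-!
Send `X ↦ T` and `Y ↦ -T`. This kills `X + Y` and turns `h(XY)` into `h(-T²)`, a polynomial in
`T²`, so the relation would give `T = h(-T²)`, whose coefficients of `T` disagree.
-/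

theorem Polynomial.X_ne_expand {R : Type*} [CommSemiring R] [Nontrivial R] {p : ℕ} (hp : 1 < p)
    (f : Polynomial R) : Polynomial.X ≠ Polynomial.expand R p f := by
  intro h
  have := congrArg (Polynomial.coeff · 1) h
  simp [Polynomial.coeff_expand (zero_lt_one.trans hp), Nat.dvd_one, hp.ne'] at this

theorem not_exists_X_eq_aeval_mul_add_mul {R : Type*} [CommRing R] [Nontrivial R] :
    ¬ ∃ (g : MvPolynomial (Fin 2) R) (h : Polynomial R),
      (X 0 : MvPolynomial (Fin 2) R) = Polynomial.aeval (X 0 * X 1) h + (X 0 + X 1) * g := by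
  rintro ⟨g, h, heq⟩
  have hdiag :
      (Polynomial.X : Polynomial R) = Polynomial.aeval (-(Polynomial.X * Polynomial.X)) h := by
    have := congrArg (aeval ![(Polynomial.X : Polynomial R), -Polynomial.X]) heq
    rw [map_add, map_mul, ← Polynomial.aeval_algHom_apply, map_mul, map_add, aeval_X, aeval_X]
      at this
    simpa only [Matrix.cons_val_zero, Matrix.cons_val_one, add_neg_cancel, zero_mul, add_zero,
      mul_neg] using this
  have hexpand : Polynomial.aeval (-(Polynomial.X * Polynomial.X)) h =
      Polynomial.expand R 2 (h.comp (-Polynomial.X)) := by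
    rw [Polynomial.expand_eq_comp_X_pow, Polynomial.comp_assoc, ← Polynomial.comp_eq_aeval]
    simp [sq]
  exact Polynomial.X_ne_expand one_lt_two _ (hdiag.trans hexpand)

/-- In `S = 𝔽₂[X,Y]` there are no polynomials `g(X,Y) ∈ S` and
`h ∈ 𝔽₂[T]` with `X = h(XY) + (X+Y)·g(X,Y)`. -/
theorem stmt8 :
    ¬ ∃ (g : MvPolynomial (Fin 2) (ZMod 2)) (h : Polynomial (ZMod 2)),
      (X 0 : MvPolynomial (Fin 2) (ZMod 2)) =
        Polynomial.aeval (X 0 * X 1 : MvPolynomial (Fin 2) (ZMod 2)) h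
          + (X 0 + X 1) * g :=
  not_exists_X_eq_aeval_mul_add_mul
end

section
/- Let k be a field of characteristic 2 and V the k(x_1,…,x_g)-vector space of polynomials f ∈ k(x_1,…,x_g)[y_1,…,y_g] with deg_{y_i}(f) ≤ 1 for all i, equipped with the linear involution ι fixing x_i and sending y_i ↦ y_i + x_i. Then the eigenspace V^ι of ι for eigenvalue 1 has dimension exactly 2^{g−1}, with basis the traces f_{M∪{g}} = Tr(∏_{i∈M∪{g}} y_i) for M ⊆ {1,…,g−1}. -/
open MvPolynomial

lemma aux_prodX_eq_monomial {σ R : Type*} [CommSemiring R] [DecidableEq σ] (s : Finset σ) :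
    (∏ i ∈ s, X i : MvPolynomial σ R) = monomial (∑ i ∈ s, Finsupp.single i 1) 1 := by
  induction s using Finset.induction with
  | empty => simp [monomial_zero']
  | @insert a s h ih =>
    rw [Finset.prod_insert h, Finset.sum_insert h, ih, X, monomial_mul, one_mul]

lemma aux_sum_single_injective {σ : Type*} [DecidableEq σ] :
    Function.Injective (fun s : Finset σ => ∑ i ∈ s, Finsupp.single i (1 : ℕ)) := by
  intro s t h
  have key : ∀ (u : Finset σ) (j : σ), (∑ i ∈ u, Finsupp.single i (1:ℕ)) j
      = if j ∈ u then 1 else 0 := by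
    intro u j
    rw [Finsupp.finset_sum_apply]
    simp [Finsupp.single_apply, Finset.sum_ite_eq u j]
  ext j
  have := congrFun (congrArg (fun f : σ →₀ ℕ => (f : σ → ℕ)) h) j
  simp only [key] at this
  by_contra hc
  rcases Decidable.em (j ∈ s) with hs | hs <;> rcases Decidable.em (j ∈ t) with ht | ht <;>
    simp [hs, ht] at this hc ⊢

lemma aux_li_prodX {σ K : Type*} [Field K] [DecidableEq σ] :
    LinearIndependent K (fun s : Finset σ => (∏ i ∈ s, X i : MvPolynomial σ K)) := by
  have : (fun s : Finset σ => (∏ i ∈ s, X i : MvPolynomial σ K))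
      = (fun d : σ →₀ ℕ => (monomial d (1:K))) ∘ (fun s : Finset σ => ∑ i ∈ s, Finsupp.single i 1) := by
    funext s; exact aux_prodX_eq_monomial s
  rw [this, ← coe_basisMonomials]
  exact (basisMonomials σ K).linearIndependent.comp _ aux_sum_single_injective

set_option maxHeartbeats 2000000 in
/-- Over a field `k` of characteristic 2, let `K = k(x₁,…,x_g)` and
let `V ⊆ K[y₁,…,y_g]` be the span of the square-free monomials (i.e. polynomials
with `deg_{yᵢ} ≤ 1`), with the `K`-linear involution `ι : yᵢ ↦ yᵢ + xᵢ`.  Then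
the fixed space `V^ι` (eigenspace of `ι` for eigenvalue 1) has dimension exactly
`2^{g−1}` and is spanned by the traces `f_{M∪{g}}`, `M ⊆ {1,…,g−1}` (which thus
form a basis).  Here there are `g+1` variables, indexed by `Fin (g+1)`. -/
theorem stmt11 (k : Type*) [Field k] [CharP k 2] (g : ℕ)
    (K : Type*) [Field K] [Algebra (MvPolynomial (Fin (g + 1)) k) K]
    [IsFractionRing (MvPolynomial (Fin (g + 1)) k) K]
    (x : Fin (g + 1) → K)
    (hx : ∀ i, x i = algebraMap (MvPolynomial (Fin (g + 1)) k) K (X i))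
    (ι : MvPolynomial (Fin (g + 1)) K →ₐ[K] MvPolynomial (Fin (g + 1)) K)
    (hι : ι = aeval (fun i => X i + C (x i)))
    (V : Submodule K (MvPolynomial (Fin (g + 1)) K))
    (hV : V = Submodule.span K
      {m | ∃ s : Finset (Fin (g + 1)), m = ∏ i ∈ s, X i})
    (f : Finset (Fin (g + 1)) → MvPolynomial (Fin (g + 1)) K)
    (hf : ∀ M, f M = ∏ i ∈ M, (X i : MvPolynomial (Fin (g + 1)) K)
      + ∏ i ∈ M, (X i + C (x i))) :
    LinearMap.ker (ι.toLinearMap - LinearMap.id) ⊓ V =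
      Submodule.span K (Set.range
        (fun M : Finset (Fin g) => f (insert (Fin.last g) (M.map Fin.castSuccEmb)))) ∧
    Module.finrank K ↥(LinearMap.ker (ι.toLinearMap - LinearMap.id) ⊓ V) = 2 ^ g := by
  classical
  haveI : CharP K 2 :=
    charP_of_injective_algebraMap (IsFractionRing.injective (MvPolynomial (Fin (g+1)) k) K) 2
  haveI : CharP (MvPolynomial (Fin (g+1)) K) 2 := inferInstance
  set e : Finset (Fin (g+1)) → MvPolynomial (Fin (g + 1)) K := fun s => ∏ i ∈ s, X i with he
  have hVe : V = Submodule.span K (Set.range e) := by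
    rw [hV]; congr 1; ext m
    exact ⟨fun ⟨s, h⟩ => ⟨s, h.symm⟩, fun ⟨s, h⟩ => ⟨s, h.symm⟩⟩
  have lie : LinearIndependent K e := aux_li_prodX
  have heV : ∀ s, e s ∈ V := fun s => hVe ▸ Submodule.subset_span ⟨s, rfl⟩
  -- ι is an involution
  have hι2 : ∀ p : MvPolynomial (Fin (g + 1)) K, ι (ι p) = p := by
    intro p
    have : ι.comp ι = AlgHom.id K (MvPolynomial (Fin (g + 1)) K) := by
      apply MvPolynomial.algHom_ext
      intro i
      simp [hι, aeval_X, map_add, aeval_C]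
      rw [add_assoc, CharTwo.add_self_eq_zero, add_zero]
    exact congrFun (congrArg (fun h : MvPolynomial (Fin (g + 1)) K →ₐ[K] MvPolynomial (Fin (g + 1)) K => (h : MvPolynomial (Fin (g + 1)) K → MvPolynomial (Fin (g + 1)) K)) this) p
  have hιe : ∀ s, ι (e s) = ∏ i ∈ s, (X i + C (x i)) := by
    intro s
    rw [he]; simp only [map_prod, hι, aeval_X]
  have hιeV : ∀ s, ι (e s) ∈ V := by
    intro s
    rw [hιe, Finset.prod_add, hVe]
    refine Submodule.sum_mem _ fun t ht => ?_
    have : (∏ i ∈ t, (X i : MvPolynomial (Fin (g + 1)) K)) * ∏ i ∈ s \ t, C (x i)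
        = (∏ i ∈ s \ t, x i) • e t := by
      rw [smul_eq_C_mul, mul_comm, map_prod]
    rw [this]
    exact Submodule.smul_mem _ _ (Submodule.subset_span ⟨t, rfl⟩)
  set N : MvPolynomial (Fin (g + 1)) K →ₗ[K] MvPolynomial (Fin (g + 1)) K := ι.toLinearMap - LinearMap.id with hNdef
  have hNapp : ∀ p : MvPolynomial (Fin (g + 1)) K, N p = ι p + p := by
    intro p
    simp [hNdef, sub_eq_add_neg, CharTwo.neg_eq]
  have hNe : ∀ s, N (e s) = f s := by
    intro s; rw [hNapp, hf, hιe]; exact add_comm _ _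
  have hN2 : ∀ p : MvPolynomial (Fin (g + 1)) K, N (N p) = 0 := by
    intro p
    rw [hNapp, hNapp, map_add, hι2]
    rw [show p + ι p + (ι p + p) = (p + p) + (ι p + ι p) by ring,
      CharTwo.add_self_eq_zero, CharTwo.add_self_eq_zero, add_zero]
  have hNV : ∀ p ∈ V, N p ∈ V := by
    intro p hp
    rw [hVe] at hp
    induction hp using Submodule.span_induction with
    | mem q hq =>
      obtain ⟨s, rfl⟩ := hq
      rw [hNe, hf]
      exact Submodule.add_mem _ (heV s) (by rw [← hιe]; exact hιeV s)
    | zero => simp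
    | add a b _ _ ha hb => rw [map_add]; exact Submodule.add_mem _ ha hb
    | smul c a _ ha => rw [map_smul]; exact Submodule.smul_mem _ _ ha
  haveI : FiniteDimensional K V := by
    rw [hVe]; exact FiniteDimensional.span_of_finite K (Set.finite_range e)
  have hdimV : Module.finrank K V = 2 ^ (g + 1) := by
    rw [hVe, Module.finrank_eq_card_basis (Module.Basis.span lie), Fintype.card_finset, Fintype.card_fin]
  -- the trace family
  have hlast : ∀ M : Finset (Fin g), Fin.last g ∉ M.map Fin.castSuccEmb := by
    intro M hmem
    rw [Finset.mem_map] at hmem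
    obtain ⟨a, _, ha⟩ := hmem
    exact absurd ha (Fin.castSucc_lt_last a).ne
  set F : Finset (Fin g) → MvPolynomial (Fin (g + 1)) K :=
    fun M : Finset (Fin g) => f (insert (Fin.last g) (M.map Fin.castSuccEmb)) with hFdef
  set φ : MvPolynomial (Fin (g+1)) K →ₐ[K] MvPolynomial (Fin (g+1)) K :=
    aeval (fun i => if i = Fin.last g then 0 else X i) with hφ
  have hx0 : x (Fin.last g) ≠ 0 := by
    rw [hx]
    intro h
    have h0 := IsFractionRing.injective (MvPolynomial (Fin (g+1)) k) K (h.trans (map_zero _).symm)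
    exact X_ne_zero _ h0
  have ιC : ∀ c : K, ι (C c) = C c := by
    intro c
    rw [← MvPolynomial.algebraMap_eq]
    exact ι.commutes c
  have hFval : ∀ M : Finset (Fin g), F M
      = e (insert (Fin.last g) (M.map Fin.castSuccEmb))
        + ι (e (insert (Fin.last g) (M.map Fin.castSuccEmb))) := by
    intro M
    rw [hιe]; exact hf _
  set L : MvPolynomial (Fin (g+1)) K →ₗ[K] MvPolynomial (Fin (g+1)) K :=
    (x (Fin.last g))⁻¹ • (ι.toLinearMap ∘ₗ φ.toLinearMap) with hL
  have hLF : ∀ M : Finset (Fin g), L (F M) = e (M.map Fin.castSuccEmb) := by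
    intro M
    have h1 : φ (e (insert (Fin.last g) (M.map Fin.castSuccEmb))) = 0 := by
      show φ (∏ i ∈ insert (Fin.last g) (M.map Fin.castSuccEmb), X i) = 0
      rw [map_prod, Finset.prod_insert (hlast M)]
      simp [hφ, aeval_X]
    have h2 : φ (ι (e (insert (Fin.last g) (M.map Fin.castSuccEmb))))
        = C (x (Fin.last g)) * ι (e (M.map Fin.castSuccEmb)) := by
      rw [hιe, map_prod, Finset.prod_insert (hlast M)]
      have hfac : ∀ i ∈ M.map Fin.castSuccEmb, φ (X i + C (x i)) = X i + C (x i) := by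
        intro i hi
        have hne : i ≠ Fin.last g := fun h => hlast M (h ▸ hi)
        rw [map_add, hφ, aeval_X, if_neg hne, aeval_C, MvPolynomial.algebraMap_eq]
      rw [Finset.prod_congr rfl hfac, map_add, hφ, aeval_X, if_pos rfl, aeval_C,
        MvPolynomial.algebraMap_eq, zero_add, hιe]
    rw [hL]
    simp only [LinearMap.smul_apply, LinearMap.coe_comp, Function.comp_apply,
      AlgHom.toLinearMap_apply]
    rw [hFval, map_add, h1, h2, zero_add, map_mul, ιC, hι2, ← smul_eq_C_mul, smul_smul,
      inv_mul_cancel₀ hx0, one_smul]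
  have liF : LinearIndependent K F := by
    apply LinearIndependent.of_comp L
    have hc : (⇑L ∘ F) = e ∘ (fun M : Finset (Fin g) => M.map Fin.castSuccEmb) := by
      funext M; exact hLF M
    rw [hc]
    exact lie.comp _ (Finset.map_injective _)
  have hFV : ∀ M, F M ∈ V := by
    intro M
    rw [hFval]
    exact Submodule.add_mem _ (heV _) (hιeV _)
  have hFker : ∀ M, F M ∈ LinearMap.ker N := by
    intro M
    have h0 := hN2 (e (insert (Fin.last g) (M.map Fin.castSuccEmb)))
    rw [hNe] at h0
    exact h0
  have hspanle : Submodule.span K (Set.range F) ≤ LinearMap.ker N ⊓ V := by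
    rw [Submodule.span_le]
    rintro _ ⟨M, rfl⟩
    exact Submodule.mem_inf.2 ⟨hFker M, hFV M⟩
  have hdimF : Module.finrank K ↥(Submodule.span K (Set.range F)) = 2 ^ g := by
    rw [Module.finrank_eq_card_basis (Module.Basis.span liF), Fintype.card_finset, Fintype.card_fin]
  -- restriction of N to V
  set Nv : V →ₗ[K] V := N.restrict hNV with hNv
  have hkermap : Submodule.map V.subtype (LinearMap.ker Nv) = LinearMap.ker N ⊓ V := by
    ext p
    rw [Submodule.mem_map]
    constructor
    · rintro ⟨q, hk, rfl⟩
      rw [LinearMap.mem_ker] at hk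
      refine Submodule.mem_inf.2 ⟨?_, q.2⟩
      rw [LinearMap.mem_ker]
      have hval := congrArg Subtype.val hk
      simpa [hNv, LinearMap.restrict_apply] using hval
    · intro hp
      obtain ⟨h1, h2⟩ := Submodule.mem_inf.1 hp
      rw [LinearMap.mem_ker] at h1
      refine ⟨⟨p, h2⟩, ?_, rfl⟩
      rw [LinearMap.mem_ker]
      exact Subtype.ext (by simpa [hNv, LinearMap.restrict_apply] using h1)
  have hrankker : Module.finrank K ↥(LinearMap.ker N ⊓ V)
      = Module.finrank K ↥(LinearMap.ker Nv) := by
    rw [← hkermap, Submodule.finrank_map_subtype_eq]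
  set Fv : Finset (Fin g) → V := fun M => ⟨F M, hFV M⟩ with hFv
  have liFv : LinearIndependent K Fv := by
    apply LinearIndependent.of_comp V.subtype
    exact liF
  have hFvrange : ∀ M, Fv M ∈ LinearMap.range Nv := by
    intro M
    refine ⟨⟨e (insert (Fin.last g) (M.map Fin.castSuccEmb)), heV _⟩, ?_⟩
    apply Subtype.ext
    simpa [hNv, LinearMap.restrict_apply] using hNe (insert (Fin.last g) (M.map Fin.castSuccEmb))
  have hrange_ge : 2 ^ g ≤ Module.finrank K ↥(LinearMap.range Nv) := by
    have hle : Submodule.span K (Set.range Fv) ≤ LinearMap.range Nv := by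
      rw [Submodule.span_le]; rintro _ ⟨M, rfl⟩; exact hFvrange M
    have hd : Module.finrank K ↥(Submodule.span K (Set.range Fv)) = 2 ^ g := by
      rw [Module.finrank_eq_card_basis (Module.Basis.span liFv), Fintype.card_finset, Fintype.card_fin]
    calc 2 ^ g = _ := hd.symm
      _ ≤ _ := Submodule.finrank_mono hle
  have hrn := LinearMap.finrank_range_add_finrank_ker Nv
  rw [hdimV, show (2:ℕ) ^ (g+1) = 2 ^ g + 2 ^ g by ring] at hrn
  have hker_le : Module.finrank K ↥(LinearMap.ker Nv) ≤ 2 ^ g := by linarith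
  haveI : FiniteDimensional K ↥(LinearMap.ker N ⊓ V) :=
    Submodule.finiteDimensional_of_le inf_le_right
  have hkerle : Module.finrank K ↥(LinearMap.ker N ⊓ V) ≤ 2 ^ g := by
    rw [hrankker]; exact hker_le
  have heq : Submodule.span K (Set.range F) = LinearMap.ker N ⊓ V :=
    Submodule.eq_of_le_of_finrank_le hspanle (by rw [hdimF]; exact hkerle)
  refine ⟨heq.symm, ?_⟩
  rw [← heq]
  exact hdimF
end

section
/- Let k be a field of characteristic 2, V^ι the fixed space of the involution ι (x_i ↦ x_i, y_i ↦ y_i + x_i) on V = {f ∈ k(x_1,…,x_g)[y_1,…,y_g] : deg_{y_i} f ≤ 1}, and a_1,…,a_l a basis of V^ι over k(x_1,…,x_g). Then a_1,…,a_l, y_g a_1,…, y_g a_l are linearly independent in k(x_1,…,x_g)[y_1,…,y_g]; in particular l ≤ 2^{g−1}. -/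
open MvPolynomial

theorem Stmt12.prodX_eq_monomial (K : Type*) [CommSemiring K] {n : ℕ} (s : Finset (Fin n)) :
    (∏ i ∈ s, (X i : MvPolynomial (Fin n) K)) = monomial (∑ i ∈ s, Finsupp.single i 1) 1 := by
  classical
  induction s using Finset.induction_on with
  | empty => simp
  | insert _ _ h ih =>
      rw [Finset.prod_insert h, Finset.sum_insert h, ih, ← pow_one (X _), X_pow_eq_monomial,
        monomial_mul, one_mul]

theorem Stmt12.sumSingle_apply {n : ℕ} (s : Finset (Fin n)) (i : Fin n) :
    (∑ j ∈ s, Finsupp.single j 1 : Fin n →₀ ℕ) i = if i ∈ s then 1 else 0 := by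
  classical
  rw [Finsupp.finset_sum_apply]
  simp [Finsupp.single_apply]

theorem Stmt12.sumSingle_injective {n : ℕ} :
    Function.Injective (fun s : Finset (Fin n) => ∑ i ∈ s, Finsupp.single i (1 : ℕ)) := by
  intro s t hst
  ext i
  have h := congrArg (fun f : Fin n →₀ ℕ => f i) hst
  simp only [Stmt12.sumSingle_apply] at h
  by_cases hs : i ∈ s <;> by_cases ht : i ∈ t <;> simp [hs, ht] at h ⊢

theorem Stmt12.linearIndependent_prodX (K : Type*) [Field K] {n : ℕ} :
    LinearIndependent K (fun s : Finset (Fin n) => ∏ i ∈ s, (X i : MvPolynomial (Fin n) K)) := by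
  have h : (fun s : Finset (Fin n) => ∏ i ∈ s, (X i : MvPolynomial (Fin n) K))
      = (fun d : Fin n →₀ ℕ => monomial d (1 : K)) ∘
        (fun s : Finset (Fin n) => ∑ i ∈ s, Finsupp.single i 1) := by
    funext s
    exact Stmt12.prodX_eq_monomial K s
  rw [h]
  have hb := (basisMonomials (Fin n) K).linearIndependent
  rw [coe_basisMonomials] at hb
  exact hb.comp _ Stmt12.sumSingle_injective

/-- With `K = k(x₁,…,x_g)` (char 2), `V` the span of square-free
monomials in `K[y₁,…,y_g]` and `ι` the involution `yᵢ ↦ yᵢ + xᵢ`: if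
`a₁,…,a_l` is a basis of the fixed space `V^ι`, then
`a₁,…,a_l, y_g·a₁,…,y_g·a_l` are linearly independent; in particular
`l ≤ 2^{g−1}`.  Here there are `g+1` variables indexed by `Fin (g+1)`, and
`y_g = X (Fin.last g)`. -/
theorem stmt12 (k : Type*) [Field k] [CharP k 2] (g : ℕ)
    (K : Type*) [Field K] [Algebra (MvPolynomial (Fin (g + 1)) k) K]
    [IsFractionRing (MvPolynomial (Fin (g + 1)) k) K]
    (x : Fin (g + 1) → K)
    (hx : ∀ i, x i = algebraMap (MvPolynomial (Fin (g + 1)) k) K (X i))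
    (ι : MvPolynomial (Fin (g + 1)) K →ₐ[K] MvPolynomial (Fin (g + 1)) K)
    (hι : ι = aeval (fun i => X i + C (x i)))
    (V : Submodule K (MvPolynomial (Fin (g + 1)) K))
    (hV : V = Submodule.span K
      {m | ∃ s : Finset (Fin (g + 1)), m = ∏ i ∈ s, X i})
    (l : ℕ) (a : Fin l → MvPolynomial (Fin (g + 1)) K)
    (haV : ∀ j, a j ∈ V) (hafix : ∀ j, ι (a j) = a j)
    (haspan : Submodule.span K (Set.range a) =
      LinearMap.ker (ι.toLinearMap - LinearMap.id) ⊓ V)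
    (hali : LinearIndependent K a) :
    LinearIndependent K
      (Sum.elim a (fun j => X (Fin.last g) * a j) : Fin l ⊕ Fin l →
        MvPolynomial (Fin (g + 1)) K) ∧
    l ≤ 2 ^ g := by
  classical
  have hinj : Function.Injective (algebraMap (MvPolynomial (Fin (g + 1)) k) K) :=
    IsFractionRing.injective _ _
  have hxne : x (Fin.last g) ≠ 0 := by
    rw [hx]
    intro h
    exact MvPolynomial.X_ne_zero (R := k) (Fin.last g) (hinj (h.trans (map_zero _).symm))
  have hιX : ∀ i, ι (X i) = X i + C (x i) := by
    intro i; rw [hι]; exact aeval_X _ i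
  -- characteristic two in K
  have h2K : (2 : K) = 0 := by
    have h2P : ((2 : ℕ) : MvPolynomial (Fin (g + 1)) k) = 0 := by
      have h2k : ((2 : ℕ) : k) = 0 := CharP.cast_eq_zero k 2
      rw [← map_natCast (C : k →+* MvPolynomial (Fin (g + 1)) k), h2k, map_zero]
    have : ((2 : ℕ) : K) = 0 := by
      rw [← map_natCast (algebraMap (MvPolynomial (Fin (g + 1)) k) K), h2P, map_zero]
    simpa using this
  -- the operator N = ι - 1
  set N : MvPolynomial (Fin (g + 1)) K →ₗ[K] MvPolynomial (Fin (g + 1)) K :=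
    ι.toLinearMap - LinearMap.id with hNdef
  have hNapply : ∀ v, N v = ι v - v := fun v => rfl
  have hNa : ∀ j, N (a j) = 0 := by
    intro j; rw [hNapply, hafix, sub_self]
  have hNya : ∀ j, N (X (Fin.last g) * a j) = x (Fin.last g) • a j := by
    intro j
    rw [hNapply, map_mul, hιX, hafix, smul_eq_C_mul]
    ring
  -- Part 1
  have part1 : LinearIndependent K
      (Sum.elim a (fun j => X (Fin.last g) * a j) : Fin l ⊕ Fin l →
        MvPolynomial (Fin (g + 1)) K) := by
    rw [Fintype.linearIndependent_iff]
    intro c hc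
    rw [Fintype.sum_sum_type] at hc
    simp only [Sum.elim_inl, Sum.elim_inr] at hc
    have h0 : ∑ j, (c (Sum.inr j) * x (Fin.last g)) • a j = 0 := by
      have := congrArg N hc
      simpa [map_sum, hNa, hNya, smul_smul] using this
    have hcr : ∀ j, c (Sum.inr j) = 0 := by
      intro j
      have h := Fintype.linearIndependent_iff.mp hali _ h0 j
      rcases mul_eq_zero.mp h with h' | h'
      · exact h'
      · exact absurd h' hxne
    have hcl : ∀ j, c (Sum.inl j) = 0 := by
      have hA : ∑ j, c (Sum.inl j) • a j = 0 := by
        simpa [hcr] using hc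
      exact Fintype.linearIndependent_iff.mp hali _ hA
    rintro (j | j)
    · exact hcl j
    · exact hcr j
  refine ⟨part1, ?_⟩
  -- ι fixes constants, ι ∘ ι = id
  have hιC : ∀ c : K, ι (C c) = C c := by
    intro c
    rw [← MvPolynomial.algebraMap_eq]
    exact ι.commutes c
  have hι2 : ∀ p, ι (ι p) = p := by
    have hext : ι.comp ι = AlgHom.id K (MvPolynomial (Fin (g + 1)) K) := by
      apply MvPolynomial.algHom_ext
      intro i
      rw [AlgHom.comp_apply, AlgHom.id_apply, hιX, map_add, hιX, hιC, add_assoc,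
        ← map_add, ← two_mul, h2K, zero_mul, map_zero, add_zero]
    intro p
    exact DFunLike.congr_fun hext p
  -- the projection π : y_g ↦ 0
  set π : MvPolynomial (Fin (g + 1)) K →ₐ[K] MvPolynomial (Fin (g + 1)) K :=
    aeval (fun i => if i = Fin.last g then 0 else X i) with hπdef
  have hπX : ∀ i, π (X i) = if i = Fin.last g then 0 else X i := by
    intro i; rw [hπdef]; exact aeval_X _ i
  have hπC : ∀ c : K, π (C c) = C c := by
    intro c
    rw [← MvPolynomial.algebraMap_eq]
    exact π.commutes c
  have hπm : ∀ s : Finset (Fin (g + 1)),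
      π (∏ i ∈ s, X i) = if Fin.last g ∈ s then 0 else ∏ i ∈ s, X i := by
    intro s
    rw [map_prod]
    by_cases hs : Fin.last g ∈ s
    · rw [if_pos hs]
      exact Finset.prod_eq_zero hs (by rw [hπX, if_pos rfl])
    · rw [if_neg hs]
      exact Finset.prod_congr rfl fun i hi => by
        rw [hπX, if_neg (by rintro rfl; exact hs hi)]
  -- the subspace V' of polynomials avoiding y_g
  set m' : Finset (Fin g) → MvPolynomial (Fin (g + 1)) K :=
    fun t => ∏ i ∈ t, X (Fin.castSuccEmb i) with hm'def
  set V' : Submodule K (MvPolynomial (Fin (g + 1)) K) :=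
    Submodule.span K (Set.range m') with hV'def
  have hm'V' : ∀ t, m' t ∈ V' := fun t => Submodule.subset_span ⟨t, rfl⟩
  have hEmap : ∀ s : Finset (Fin (g + 1)), Fin.last g ∉ s →
      ∃ t : Finset (Fin g), s = t.map Fin.castSuccEmb := by
    intro s hs
    have hsub : s ⊆ Finset.univ.map Fin.castSuccEmb := by
      intro i hi
      have hne : i ≠ Fin.last g := by rintro rfl; exact hs hi
      exact Finset.mem_map.mpr ⟨i.castPred hne, Finset.mem_univ _, Fin.castSucc_castPred i hne⟩
    obtain ⟨t, -, ht⟩ := Finset.subset_map_iff.mp hsub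
    exact ⟨t, ht⟩
  have hmV' : ∀ s : Finset (Fin (g + 1)), Fin.last g ∉ s →
      (∏ i ∈ s, X i : MvPolynomial (Fin (g + 1)) K) ∈ V' := by
    intro s hs
    obtain ⟨t, rfl⟩ := hEmap s hs
    rw [Finset.prod_map]
    exact hm'V' t
  -- π fixes V' pointwise
  have hπfix : ∀ v ∈ V', π v = v := by
    intro v hv
    rw [hV'def] at hv
    induction hv using Submodule.span_induction with
    | mem w hw =>
        obtain ⟨t, rfl⟩ := hw
        rw [hm'def, map_prod]
        exact Finset.prod_congr rfl fun i _ => by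
          rw [hπX, if_neg (by simpa using (Fin.castSucc_lt_last i).ne)]
    | zero => rw [map_zero]
    | add u w _ _ ihu ihw => rw [map_add, ihu, ihw]
    | smul c u _ ihu => rw [map_smul, ihu]
  -- π maps V into V'
  have hπV' : ∀ v ∈ V, π v ∈ V' := by
    intro v hv
    rw [hV] at hv
    induction hv using Submodule.span_induction with
    | mem w hw =>
        obtain ⟨s, rfl⟩ := hw
        rw [hπm]
        split_ifs with hs
        · exact Submodule.zero_mem _
        · exact hmV' s hs
    | zero => rw [map_zero]; exact Submodule.zero_mem _
    | add u w _ _ ihu ihw => rw [map_add]; exact Submodule.add_mem _ ihu ihw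
    | smul c u _ ihu => rw [map_smul]; exact Submodule.smul_mem _ _ ihu
  -- ι maps V' into V'
  have hιV' : ∀ v ∈ V', ι v ∈ V' := by
    intro v hv
    rw [hV'def] at hv
    induction hv using Submodule.span_induction with
    | mem w hw =>
        obtain ⟨t, rfl⟩ := hw
        rw [hm'def, map_prod]
        rw [Finset.prod_congr rfl (fun i (_ : i ∈ t) => hιX (Fin.castSuccEmb i)),
          Finset.prod_add]
        refine Submodule.sum_mem _ fun u hu => ?_
        have heq : (∏ i ∈ u, (X (Fin.castSuccEmb i) : MvPolynomial (Fin (g + 1)) K)) *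
            (∏ i ∈ t \ u, C (x (Fin.castSuccEmb i)))
            = (∏ i ∈ t \ u, x (Fin.castSuccEmb i)) • m' u := by
          rw [smul_eq_C_mul, map_prod, hm'def, mul_comm]
        rw [heq]
        exact Submodule.smul_mem _ _ (hm'V' u)
    | zero => rw [map_zero]; exact Submodule.zero_mem _
    | add u w _ _ ihu ihw => rw [map_add]; exact Submodule.add_mem _ ihu ihw
    | smul c u _ ihu => rw [map_smul]; exact Submodule.smul_mem _ _ ihu
  -- the derivative in direction y_g
  set D : MvPolynomial (Fin (g + 1)) K →ₗ[K] MvPolynomial (Fin (g + 1)) K :=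
    (pderiv (Fin.last g)).toLinearMap with hDdef
  have hDm : ∀ s : Finset (Fin (g + 1)),
      D (∏ i ∈ s, X i) = if Fin.last g ∈ s
        then ∏ i ∈ s.erase (Fin.last g), X i else 0 := by
    intro s
    have : D (∏ i ∈ s, X i) = pderiv (Fin.last g) (∏ i ∈ s, (X i : MvPolynomial (Fin (g+1)) K)) := rfl
    rw [this, Stmt12.prodX_eq_monomial, pderiv_monomial]
    by_cases hs : Fin.last g ∈ s
    · rw [if_pos hs, Stmt12.prodX_eq_monomial]
      rw [Stmt12.sumSingle_apply, if_pos hs, Nat.cast_one, mul_one]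
      congr 1
      rw [← Finset.add_sum_erase _ _ hs, add_tsub_cancel_left]
    · rw [if_neg hs, Stmt12.sumSingle_apply, if_neg hs, Nat.cast_zero, mul_zero, map_zero]
  have hDV' : ∀ v ∈ V, D v ∈ V' := by
    intro v hv
    rw [hV] at hv
    induction hv using Submodule.span_induction with
    | mem w hw =>
        obtain ⟨s, rfl⟩ := hw
        rw [hDm]
        split_ifs with hs
        · exact hmV' _ (Finset.notMem_erase _ _)
        · exact Submodule.zero_mem _
    | zero => rw [map_zero]; exact Submodule.zero_mem _
    | add u w _ _ ihu ihw => rw [map_add]; exact Submodule.add_mem _ ihu ihw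
    | smul c u _ ihu => rw [map_smul]; exact Submodule.smul_mem _ _ ihu
  -- decomposition v = π v + y_g * D v on V
  have hdecomp : ∀ v ∈ V, v = π v + X (Fin.last g) * D v := by
    intro v hv
    rw [hV] at hv
    induction hv using Submodule.span_induction with
    | mem w hw =>
        obtain ⟨s, rfl⟩ := hw
        rw [hπm, hDm]
        split_ifs with hs
        · rw [zero_add, Finset.mul_prod_erase _ _ hs]
        · rw [mul_zero, add_zero]
    | zero => rw [map_zero, map_zero, mul_zero, add_zero]
    | add u w _ _ ihu ihw =>
        rw [map_add, map_add, mul_add]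
        conv_lhs => rw [ihu, ihw]
        ring
    | smul c u _ ihu =>
        rw [map_smul, map_smul]
        conv_lhs => rw [ihu]
        rw [smul_add, mul_smul_comm]
  -- key injectivity
  have hkey : ∀ v ∈ V, ι v = v → π v = 0 → v = 0 := by
    intro v hvV hfix hπv
    have hq : v = X (Fin.last g) * D v := by
      have := hdecomp v hvV
      rwa [hπv, zero_add] at this
    have hqV' : D v ∈ V' := hDV' v hvV
    have h1 : ι v = (X (Fin.last g) + C (x (Fin.last g))) * ι (D v) := by
      calc ι v = ι (X (Fin.last g) * D v) := by rw [← hq]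
      _ = (X (Fin.last g) + C (x (Fin.last g))) * ι (D v) := by rw [map_mul, hιX]
    have h3 : π (ι v) = 0 := by rw [hfix, hπv]
    have h2 : C (x (Fin.last g)) * π (ι (D v)) = 0 := by
      rw [← h3, h1, map_mul, map_add, hπX, if_pos rfl, zero_add, hπC]
    have h4 : π (ι (D v)) = 0 := by
      rcases mul_eq_zero.mp h2 with h' | h'
      · exact absurd (by simpa using h') hxne
      · exact h'
    have h5 : ι (D v) = 0 := by rw [← hπfix _ (hιV' _ hqV'), h4]
    have h6 : D v = 0 := by rw [← hι2 (D v), h5, map_zero]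
    rw [hq, h6, mul_zero]
  -- π ∘ a is linearly independent
  have hπa : LinearIndependent K (fun j => π (a j)) := by
    rw [Fintype.linearIndependent_iff]
    intro c hc
    have hmem : (∑ j, c j • a j) ∈ Submodule.span K (Set.range a) :=
      Submodule.sum_mem _ fun j _ =>
        Submodule.smul_mem _ _ (Submodule.subset_span ⟨j, rfl⟩)
    rw [haspan] at hmem
    obtain ⟨hker, hVm⟩ := hmem
    have hfix : ι (∑ j, c j • a j) = ∑ j, c j • a j := by
      have h := LinearMap.mem_ker.mp hker
      have h' : ι (∑ j, c j • a j) - (∑ j, c j • a j) = 0 := h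
      rwa [sub_eq_zero] at h'
    have hπ0 : π (∑ j, c j • a j) = 0 := by
      rw [map_sum]
      simpa [map_smul] using hc
    have hv0 : (∑ j, c j • a j) = 0 := hkey _ hVm hfix hπ0
    exact Fintype.linearIndependent_iff.mp hali c hv0
  -- conclude via the dimension of V'
  have hm'li : LinearIndependent K m' := by
    have h := Stmt12.linearIndependent_prodX K (n := g + 1)
    have h2 := h.comp (fun t : Finset (Fin g) => t.map Fin.castSuccEmb)
      (Finset.map_injective _)
    have heq : m' = (fun s : Finset (Fin (g + 1)) =>
        ∏ i ∈ s, (X i : MvPolynomial (Fin (g + 1)) K)) ∘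
        (fun t : Finset (Fin g) => t.map Fin.castSuccEmb) := by
      funext t
      rw [hm'def]
      exact (Finset.prod_map t Fin.castSuccEmb X).symm
    rw [heq]
    exact h2
  have hfinV' : FiniteDimensional K V' := by
    rw [hV'def]
    exact FiniteDimensional.span_of_finite K (Set.finite_range m')
  have hrankV' : Module.finrank K V' = 2 ^ g := by
    rw [hV'def]
    rw [finrank_span_eq_card hm'li]
    rw [Fintype.card_finset, Fintype.card_fin]
  have hsub : LinearIndependent K (fun j => (⟨π (a j), hπV' _ (haV j)⟩ : V')) := by
    apply LinearIndependent.of_comp V'.subtype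
    exact hπa
  have hle : l ≤ Module.finrank K V' := by
    simpa using hsub.fintype_card_le_finrank
  rw [hrankV'] at hle
  exact hle
end

section
/- Let k be an algebraically closed field of characteristic 2 and R = k[x_1,y_1]/(y_1^2 + x_1 y_1 + γ x_1^3 + γ^{-2} x_1) for some γ ∈ k, γ ≠ 0, with ℤ/2ℤ-action ι(x_1) = x_1, ι(y_1) = y_1 + x_1. Then the ring of invariants R^ι equals the subalgebra k[x_1] generated by x_1 = Tr(y_1). -/
open MvPolynomial

noncomputable def myE (k : Type*) [CommSemiring k] :
    MvPolynomial (Fin 2) k ≃ₐ[k] Polynomial (Polynomial k) :=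
  (renameEquiv k (Equiv.swap (0:Fin 2) 1)).trans
    ((MvPolynomial.finSuccEquiv k 1).trans
      (Polynomial.mapAlgEquiv
        ((MvPolynomial.finSuccEquiv k 0).trans
          (Polynomial.mapAlgEquiv (MvPolynomial.isEmptyAlgEquiv k (Fin 0))))))

lemma myE_X1 (k : Type*) [CommSemiring k] : myE k (X 1) = Polynomial.X := by
  simp [myE, Equiv.swap_apply_right, finSuccEquiv_X_zero]

lemma myE_X0 (k : Type*) [CommSemiring k] : myE k (X 0) = Polynomial.C Polynomial.X := by
  have h1 : (X (1:Fin 2) : MvPolynomial (Fin 2) k) = X (Fin.succ 0) := rfl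
  have h0 : (X (0:Fin 1) : MvPolynomial (Fin 1) k) = X 0 := rfl
  simp [myE, Equiv.swap_apply_left, h1, finSuccEquiv_X_succ, finSuccEquiv_X_zero]

lemma myE_C (k : Type*) [CommSemiring k] (c : k) :
    myE k (C c) = Polynomial.C (Polynomial.C c) := by
  have := (myE k).commutes c
  simpa [MvPolynomial.algebraMap_eq, Polynomial.algebraMap_apply] using this

lemma myE_aeval (k : Type*) [CommSemiring k] (a : Polynomial k) :
    myE k (Polynomial.aeval (X 0) a) = Polynomial.C a := by
  have : (myE k) (Polynomial.aeval (X 0) a)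
      = Polynomial.aeval (myE k (X 0)) a := by
    exact (Polynomial.aeval_algHom_apply (myE k).toAlgHom (X 0) a).symm
  rw [this, myE_X0]
  have : (Polynomial.C (Polynomial.X) : Polynomial (Polynomial k))
      = Polynomial.CAlgHom (R := k) (Polynomial.X) := rfl
  rw [this, Polynomial.aeval_algHom_apply, Polynomial.aeval_X_left_apply]
  rfl

lemma myE_f (k : Type*) [Field k] (γ : k) :
    myE k ((X 1)^2 + X 0 * X 1 + C γ * (X 0)^3 + C (γ ^ 2)⁻¹ * X 0)
      = Polynomial.X^2 + (Polynomial.C Polynomial.X * Polynomial.X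
        + Polynomial.C (Polynomial.C γ * Polynomial.X^3
            + Polynomial.C (γ^2)⁻¹ * Polynomial.X)) := by
  simp only [map_add, map_mul, map_pow, myE_X0, myE_X1, myE_C, map_add]
  ring

lemma low (k : Type*) [Field k] (γ : k) (a b : Polynomial k)
    (hmem : Polynomial.aeval (X 0) a + Polynomial.aeval (X 0) b * X 1 ∈
      Ideal.span {((X 1)^2 + X 0 * X 1 + C γ * (X 0)^3 + C (γ ^ 2)⁻¹ * X 0 :
        MvPolynomial (Fin 2) k)}) :
    a = 0 ∧ b = 0 := by
  rw [Ideal.mem_span_singleton] at hmem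
  obtain ⟨g, hg⟩ := hmem
  have hdvd : myE k ((X 1)^2 + X 0 * X 1 + C γ * (X 0)^3 + C (γ ^ 2)⁻¹ * X 0) ∣
      myE k ((Polynomial.aeval (X 0)) a + (Polynomial.aeval (X 0)) b * X 1) :=
    ⟨myE k g, by rw [hg, map_mul]⟩
  have hp : myE k ((Polynomial.aeval (X 0)) a + (Polynomial.aeval (X 0)) b * X 1)
      = Polynomial.C a + Polynomial.C b * Polynomial.X := by
    rw [map_add, map_mul, myE_aeval, myE_aeval, myE_X1]
  rw [myE_f, hp] at hdvd
  have hdeg : (Polynomial.X^2 + (Polynomial.C Polynomial.X * Polynomial.X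
        + Polynomial.C (Polynomial.C γ * Polynomial.X^3
            + Polynomial.C (γ^2)⁻¹ * Polynomial.X)) : Polynomial (Polynomial k)).degree = 2 := by
    rw [Polynomial.degree_add_eq_left_of_degree_lt]
    · exact_mod_cast Polynomial.degree_X_pow 2
    · rw [Polynomial.degree_X_pow]
      exact_mod_cast Polynomial.degree_linear_lt
  have h0 : (Polynomial.C a + Polynomial.C b * Polynomial.X : Polynomial (Polynomial k)) = 0 := by
    apply Polynomial.eq_zero_of_dvd_of_degree_lt hdvd
    rw [hdeg]
    rw [add_comm]
    exact Polynomial.degree_linear_lt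
  constructor
  · have := congrArg (fun p => Polynomial.coeff p 0) h0
    simpa using this
  · have := congrArg (fun p => Polynomial.coeff p 1) h0
    simpa using this

lemma two_eq_zero (k : Type*) [Field k] [CharP k 2] :
    (2 : MvPolynomial (Fin 2) k) = 0 := by
  have h2k : (2 : k) = 0 := by exact_mod_cast CharP.cast_eq_zero k 2
  rw [← map_ofNat (C : k →+* MvPolynomial (Fin 2) k) 2, h2k, map_zero]

lemma nf (k : Type*) [Field k] [CharP k 2] (γ : k) (h : MvPolynomial (Fin 2) k) :
    ∃ a b : Polynomial k,
      h - (Polynomial.aeval (X 0) a + Polynomial.aeval (X 0) b * X 1) ∈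
        Ideal.span {((X 1)^2 + X 0 * X 1 + C γ * (X 0)^3 + C (γ ^ 2)⁻¹ * X 0 :
          MvPolynomial (Fin 2) k)} := by
  set f : MvPolynomial (Fin 2) k :=
    (X 1)^2 + X 0 * X 1 + C γ * (X 0)^3 + C (γ ^ 2)⁻¹ * X 0 with hf
  induction h using MvPolynomial.induction_on with
  | C c =>
    refine ⟨Polynomial.C c, 0, ?_⟩
    simp [MvPolynomial.algebraMap_eq]
  | add p q ihp ihq =>
    obtain ⟨a1, b1, h1⟩ := ihp
    obtain ⟨a2, b2, h2⟩ := ihq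
    refine ⟨a1 + a2, b1 + b2, ?_⟩
    have key : p + q - (Polynomial.aeval (X 0) (a1+a2) + Polynomial.aeval (X 0) (b1+b2) * X 1)
        = (p - (Polynomial.aeval (X 0) a1 + Polynomial.aeval (X 0) b1 * X 1))
          + (q - (Polynomial.aeval (X 0) a2 + Polynomial.aeval (X 0) b2 * X 1)) := by
      simp only [map_add]; ring
    rw [key]
    exact add_mem h1 h2
  | mul_X p i ih =>
    obtain ⟨a, b, hab⟩ := ih
    fin_cases i
    · refine ⟨Polynomial.X * a, Polynomial.X * b, ?_⟩
      show p * X 0 - (Polynomial.aeval (X 0) (Polynomial.X * a)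
            + Polynomial.aeval (X 0) (Polynomial.X * b) * X 1) ∈ Ideal.span {f}
      have key : p * X 0 - (Polynomial.aeval (X 0) (Polynomial.X * a)
            + Polynomial.aeval (X 0) (Polynomial.X * b) * X 1)
          = X 0 * (p - (Polynomial.aeval (X 0) a + Polynomial.aeval (X 0) b * X 1)) := by
        simp only [map_mul, Polynomial.aeval_X]; ring
      rw [key]
      exact Ideal.mul_mem_left _ _ hab
    · set g : Polynomial k := Polynomial.C γ * Polynomial.X^3
        + Polynomial.C ((γ:k) ^ 2)⁻¹ * Polynomial.X with hg
      refine ⟨g * b, a + Polynomial.X * b, ?_⟩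
      show p * X 1 - (Polynomial.aeval (X 0) (g * b)
            + Polynomial.aeval (X 0) (a + Polynomial.X * b) * X 1) ∈ Ideal.span {f}
      have key : p * X 1 - (Polynomial.aeval (X 0) (g * b)
            + Polynomial.aeval (X 0) (a + Polynomial.X * b) * X 1)
          = X 1 * (p - (Polynomial.aeval (X 0) a + Polynomial.aeval (X 0) b * X 1))
            + Polynomial.aeval (X 0) b * f
            - 2 * (Polynomial.aeval (X 0) b
                * (X 0 * X 1 + C γ * (X 0)^3 + C (γ ^ 2)⁻¹ * X 0)) := by
        simp only [hg, hf, map_add, map_mul, map_pow, Polynomial.aeval_X,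
          Polynomial.aeval_C, MvPolynomial.algebraMap_eq]
        ring
      rw [key, two_eq_zero k, zero_mul, sub_zero]
      exact add_mem (Ideal.mul_mem_left _ _ hab)
        (Ideal.mul_mem_left _ _ (Ideal.subset_span rfl))

/-- Over an algebraically closed field `k` of characteristic 2, let
`R = k[x,y]/(y² + xy + γx³ + γ⁻²x)` (`γ ≠ 0`) with the involution induced by
`ι(x) = x`, `ι(y) = y + x`.  Then `R^ι = k[x̄]`: a class in `R` is invariant iff
it is the class of a polynomial in `x` alone (note `x = Tr(y)`).
Here `x = X 0`, `y = X 1`, `I = (y² + xy + γx³ + γ⁻²x)`. -/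
theorem stmt13 (k : Type*) [Field k] [IsAlgClosed k] [CharP k 2]
    (γ : k) (hγ : γ ≠ 0)
    (ι : MvPolynomial (Fin 2) k →ₐ[k] MvPolynomial (Fin 2) k)
    (hι : ι = aeval ![X 0, X 1 + X 0])
    (I : Ideal (MvPolynomial (Fin 2) k))
    (hI : I = Ideal.span
      {(X 1)^2 + X 0 * X 1 + C γ * (X 0)^3 + C (γ ^ 2)⁻¹ * X 0}) :
    ∀ h : MvPolynomial (Fin 2) k,
      ι h - h ∈ I ↔ ∃ q : Polynomial k, h - Polynomial.aeval (X 0) q ∈ I := by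
  set f : MvPolynomial (Fin 2) k :=
    (X 1)^2 + X 0 * X 1 + C γ * (X 0)^3 + C (γ ^ 2)⁻¹ * X 0 with hf
  -- ι fixes X 0, sends X 1 to X 1 + X 0, and fixes f
  have hι0 : ι (X 0) = X 0 := by rw [hι]; simp
  have hι1 : ι (X 1) = X 1 + X 0 := by rw [hι]; simp
  have hιf : ι f = f := by
    have : ι f = f + 2 * (X 0 * X 1 + (X 0)^2) := by
      rw [hι, hf]
      simp only [map_add, map_mul, map_pow, aeval_X, aeval_C,
        MvPolynomial.algebraMap_eq, Matrix.cons_val_zero, Matrix.cons_val_one,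
        Matrix.head_cons]
      ring
    rw [this, two_eq_zero k, zero_mul, add_zero]
  have hιI : ∀ p ∈ I, ι p ∈ I := by
    intro p hp
    rw [hI, Ideal.mem_span_singleton] at hp ⊢
    obtain ⟨c, rfl⟩ := hp
    exact ⟨ι c, by rw [map_mul, hιf]⟩
  have hιA : ∀ q : Polynomial k, ι (Polynomial.aeval (X 0) q) = Polynomial.aeval (X 0) q := by
    intro q
    rw [← Polynomial.aeval_algHom_apply ι (X 0) q, hι0]
  intro h
  constructor
  · intro hinv
    obtain ⟨a, b, hd⟩ := nf k γ h
    rw [← hI] at hd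
    -- B * X 0 ∈ I
    have hkey : ι (h - (Polynomial.aeval (X 0) a + Polynomial.aeval (X 0) b * X 1))
          - (h - (Polynomial.aeval (X 0) a + Polynomial.aeval (X 0) b * X 1))
        = (ι h - h) - Polynomial.aeval (X 0) b * X 0 := by
      rw [map_sub, map_add, map_mul, hι1, hιA, hιA]
      ring
    have hBx : Polynomial.aeval (X 0) b * X 0 ∈ I := by
      have h1 := hιI _ hd
      have h2 := sub_mem h1 hd
      rw [hkey] at h2
      have := sub_mem hinv h2
      simpa using this
    have hmem : Polynomial.aeval (X 0) (b * Polynomial.X)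
        + Polynomial.aeval (X 0) (0 : Polynomial k) * X 1 ∈ Ideal.span {f} := by
      rw [← hI]
      have : Polynomial.aeval (X 0) (b * Polynomial.X)
          + Polynomial.aeval (X 0) (0 : Polynomial k) * X 1
          = Polynomial.aeval (X 0) b * (X 0 : MvPolynomial (Fin 2) k) := by
        simp [map_mul]
      rw [this]
      exact hBx
    have hb0 : b = 0 := by
      have := (low k γ (b * Polynomial.X) 0 hmem).1
      rcases mul_eq_zero.mp this with h | h
      · exact h
      · exact absurd h Polynomial.X_ne_zero
    refine ⟨a, ?_⟩
    rw [hb0] at hd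
    simpa using hd
  · rintro ⟨q, hq⟩
    have h1 := hιI _ hq
    have h2 := sub_mem h1 hq
    rw [map_sub, hιA] at h2
    have : ι h - Polynomial.aeval (X 0) q - (h - Polynomial.aeval (X 0) q)
        = ι h - h := by ring
    rwa [this] at h2
end

section
/- Let k be an algebraically closed field of characteristic 2, and consider R_2 = k[X_1,X_2,T]/(T^2 + X_1 X_2 T + X_1^2 P_2(X_2) + X_2^2 P_1(X_1)) where P_i(X_i) = X_i·U_i(X_i) with U_i(0) ≠ 0 (U_i ∈ k[X_i]). Then the formal completion of R_2 at the maximal ideal (X_1,X_2,T) is isomorphic to k⟦X,Y,T⟧/(T^2 + XYT + X^2 Y + X Y^2), a rational double point of type D_4^1. -/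
/-!
The substitution `X ↦ X / U₁(X)`, `Y ↦ Y / U₂(Y)`, `T ↦ T / (U₁(X) U₂(Y))` turns the equation
`T² + XYT + X²·Y U₂(Y) + Y²·X U₁(X)` of `R₂` into `(U₁ U₂)²` times the `D₄` equation
`g = T² + XYT + X²Y + XY²`. At each finite level this gives an isomorphism
`R₂ ⧸ 𝔪ⁿ ≃ k⟦X,Y,T⟧ ⧸ ((g) + (order ≥ n))`: one direction evaluates truncated power series at the
new coordinates, a ring map because products of `n` elements of `𝔪` vanish; the inverse solves
`v = y · U(v)` by iterating a contraction of the nilpotent maximal ideal. These isomorphisms are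
compatible, so the completion of `R₂` is `k⟦X,Y,T⟧` modulo `⋂ₙ ((g) + (order ≥ n))`, and this
intersection is `(g)` because the order of power series over a field is additive.
-/

open MvPolynomial

theorem map_ringInverse {M N F : Type*} [MonoidWithZero M] [MonoidWithZero N] [FunLike F M N]
    [MonoidHomClass F M N] (f : F) {u : M} (hu : IsUnit u) :
    f (Ring.inverse u) = Ring.inverse (f u) := by
  obtain ⟨u, rfl⟩ := hu
  rw [Ring.inverse_unit, show f u = (Units.map (f : M →* N) u : N) from rfl, Ring.inverse_unit]
  rfl

theorem Ideal.pow_le_ker_of_le_comap {A D F : Type*} [CommRing A] [CommRing D] [FunLike F A D]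
    [RingHomClass F A D] (φ : F) {𝔪 : Ideal A} {𝔫 : Ideal D} {n : ℕ} (h : 𝔪 ≤ 𝔫.comap φ)
    (hn : 𝔫 ^ n = ⊥) : 𝔪 ^ n ≤ RingHom.ker φ := by
  calc 𝔪 ^ n ≤ 𝔫.comap φ ^ n := Ideal.pow_right_mono h n
    _ ≤ (𝔫 ^ n).comap φ := Ideal.le_comap_pow _ n
    _ = RingHom.ker φ := by rw [hn, RingHom.ker_eq_comap_bot]

theorem Ideal.map_mk_pow_self_pow_eq_bot {A : Type*} [CommRing A] (I : Ideal A) (n : ℕ) :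
    I.map (Ideal.Quotient.mk (I ^ n)) ^ n = ⊥ := by
  rw [← Ideal.map_pow, Ideal.map_quotient_self]

theorem isNilpotent_of_mem_pow_eq_bot {C : Type*} [CommRing C] {𝔪 : Ideal C} {n : ℕ} {x : C}
    (hx : x ∈ 𝔪) (hn : 𝔪 ^ n = ⊥) : IsNilpotent x :=
  ⟨n, by simpa [hn] using Ideal.pow_mem_pow hx n⟩

theorem MvPolynomial.aeval_eq_zero_of_le_degree {σ R C : Type*} [CommSemiring R] [CommRing C]
    [Algebra R C] {𝔪 : Ideal C} {n : ℕ} {a : σ → C} (ha : ∀ i, a i ∈ 𝔪) (hn : 𝔪 ^ n = ⊥)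
    {p : MvPolynomial σ R} (hp : ∀ d ∈ p.support, n ≤ d.degree) : aeval a p = 0 := by
  rw [p.as_sum, map_sum]
  refine Finset.sum_eq_zero fun d hd => ?_
  have hmem : d.prod (fun i e => a i ^ e) ∈ 𝔪 ^ n := by
    refine Ideal.pow_le_pow_right (hp d hd) ?_
    rw [Finsupp.degree_apply, ← Finset.prod_pow_eq_pow_sum]
    exact Ideal.prod_mem_prod fun i _ => Ideal.pow_mem_pow (ha i) _
  rw [hn, Ideal.mem_bot] at hmem
  rw [aeval_monomial, hmem, mul_zero]

namespace MvPowerSeries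

section OrderIdeal

variable (σ R : Type*) [CommSemiring R]

def orderIdeal (n : ℕ) : Ideal (MvPowerSeries σ R) where
  carrier := {F | (n : ℕ∞) ≤ F.order}
  add_mem' hF hG := (le_min hF hG).trans min_order_le_add
  zero_mem' := by simp
  smul_mem' c _ hF := hF.trans (le_add_self.trans le_order_mul)

variable {σ R} {N n : ℕ} {F g D : MvPowerSeries σ R}

theorem mem_orderIdeal : F ∈ orderIdeal σ R n ↔ (n : ℕ∞) ≤ F.order := Iff.rfl

theorem mem_orderIdeal_iff_coeff :
    F ∈ orderIdeal σ R n ↔ ∀ d : σ →₀ ℕ, d.degree < n → coeff d F = 0 :=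
  ⟨fun h _ hd => coeff_of_lt_order ((Nat.cast_lt.2 hd).trans_le h), nat_le_order⟩

theorem orderIdeal_antitone : Antitone (orderIdeal σ R) := fun _ _ hmn _ hF =>
  (Nat.cast_le.2 hmn).trans (mem_orderIdeal.1 hF)

theorem orderIdeal_mul_le (m n : ℕ) :
    orderIdeal σ R m * orderIdeal σ R n ≤ orderIdeal σ R (m + n) :=
  Ideal.mul_le.2 fun _ hF _ hG => by
    rw [mem_orderIdeal, Nat.cast_add]; exact (add_le_add hF hG).trans le_order_mul

theorem orderIdeal_one_pow_le (n : ℕ) : orderIdeal σ R 1 ^ n ≤ orderIdeal σ R n := by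
  induction n with
  | zero => exact (pow_zero _).trans_le fun F _ => by simp [mem_orderIdeal]
  | succ n ih => rw [pow_succ]; exact (Ideal.mul_mono_left ih).trans (orderIdeal_mul_le n 1)

theorem X_mem_orderIdeal_one (i : σ) : X i ∈ orderIdeal σ R 1 := by
  rw [mem_orderIdeal, Nat.cast_one, one_le_order_iff_constCoeff_eq_zero, constantCoeff_X]

theorem eq_zero_of_forall_mem_orderIdeal (h : ∀ n, F ∈ orderIdeal σ R n) : F = 0 :=
  order_eq_top_iff.1 (top_unique (ENat.forall_natCast_le_iff_le.1 fun n _ => h n))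

theorem mul_mem_orderIdeal (hg : (N : ℕ∞) ≤ g.order) (hD : D ∈ orderIdeal σ R n) :
    g * D ∈ orderIdeal σ R (N + n) :=
  orderIdeal_mul_le N n (Ideal.mul_mem_mul hg hD)

theorem mem_orderIdeal_of_mul_mem [NoZeroDivisors R] (hg : g.order = N)
    (h : g * D ∈ orderIdeal σ R (N + n)) : D ∈ orderIdeal σ R n := by
  rw [mem_orderIdeal, order_mul, hg, Nat.cast_add] at h
  exact (WithTop.add_le_add_iff_left (ENat.natCast_ne_top N)).1 h

end OrderIdeal

section Completeness

variable {σ R : Type*} [CommRing R]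

theorem exists_forall_sub_mem_orderIdeal (F : ℕ → MvPowerSeries σ R)
    (hF : ∀ n, F (n + 1) - F n ∈ orderIdeal σ R n) :
    ∃ G, ∀ n, G - F n ∈ orderIdeal σ R n := by
  have stable : ∀ d : σ →₀ ℕ, ∀ n, d.degree < n →
      coeff d (F n) = coeff d (F (d.degree + 1)) := by
    intro d n hn
    induction n, Nat.succ_le_of_lt hn using Nat.le_induction with
    | base => rfl
    | succ n hn ih =>
      rw [← ih (by omega), ← sub_eq_zero, ← map_sub]
      exact mem_orderIdeal_iff_coeff.1 (hF n) d (by omega)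
  let G : MvPowerSeries σ R := fun d => coeff d (F (d.degree + 1))
  refine ⟨G, fun n => mem_orderIdeal_iff_coeff.2 fun d hd => ?_⟩
  rw [map_sub, stable d n hd]
  exact sub_self _

theorem exists_forall_sub_mem_sup_orderIdeal (K : Ideal (MvPowerSeries σ R))
    (F : ℕ → MvPowerSeries σ R) (hF : ∀ n, F (n + 1) - F n ∈ K ⊔ orderIdeal σ R n) :
    ∃ G, ∀ n, G - F n ∈ K ⊔ orderIdeal σ R n := by
  choose k hk r hr hkr using fun n => Submodule.mem_sup.1 (hF n)
  obtain ⟨G, hG⟩ := exists_forall_sub_mem_orderIdeal (fun n => F n - ∑ i ∈ Finset.range n, k i)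
    fun n => by
      rw [Finset.sum_range_succ]
      convert hr n using 1
      linear_combination (hkr n).symm
  refine ⟨G, fun n => ?_⟩
  have : G - F n = (G - (F n - ∑ i ∈ Finset.range n, k i)) - ∑ i ∈ Finset.range n, k i := by
    ring
  rw [this]
  exact sub_mem (Ideal.mem_sup_right (hG n)) (Ideal.mem_sup_left (sum_mem fun i _ => hk i))

theorem iInf_span_singleton_sup_orderIdeal [NoZeroDivisors R] {g : MvPowerSeries σ R}
    (hg : g ≠ 0) : ⨅ n, (Ideal.span {g} ⊔ orderIdeal σ R n) = Ideal.span {g} := by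
  refine le_antisymm (fun F hF => ?_) (le_iInf fun _ => le_sup_left)
  have hdec : ∀ n, ∃ h r, r ∈ orderIdeal σ R n ∧ g * h + r = F := fun n => by
    obtain ⟨_, hy, r, hr, rfl⟩ := Submodule.mem_sup.1 (Ideal.mem_iInf.1 hF n)
    obtain ⟨h, rfl⟩ := Ideal.mem_span_singleton.1 hy
    exact ⟨h, r, hr, rfl⟩
  choose h r hr hgr using hdec
  obtain ⟨N, hN⟩ := ENat.ne_top_iff_exists.1 (mt order_eq_top_iff.1 hg)
  -- `order` is additive, so once shifted by `N = order g` the quotients `h n` converge.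
  have hcauchy : ∀ n, h (n + 1 + N) - h (n + N) ∈ orderIdeal σ R n := fun n => by
    refine mem_orderIdeal_of_mul_mem hN.symm ?_
    have : g * (h (n + 1 + N) - h (n + N)) = r (n + N) - r (n + 1 + N) := by
      linear_combination hgr (n + 1 + N) - hgr (n + N)
    rw [this, add_comm N]
    exact sub_mem (hr _) (orderIdeal_antitone (by omega) (hr _))
  obtain ⟨H, hH⟩ := exists_forall_sub_mem_orderIdeal (fun n => h (n + N)) hcauchy
  have hF : F - H * g = 0 := eq_zero_of_forall_mem_orderIdeal fun n => by
    have : F - H * g = r (n + N) - g * (H - h (n + N)) := by linear_combination -hgr (n + N)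
    rw [this]
    exact sub_mem (orderIdeal_antitone (by omega) (hr _))
      (orderIdeal_antitone (by omega) (mul_mem_orderIdeal hN.le (hH n)))
  exact Ideal.mem_span_singleton'.2 ⟨H, (sub_eq_zero.1 hF).symm⟩

end Completeness

section TruncEval

variable {σ R C : Type*} [Finite σ] [CommRing R] [CommRing C] [Algebra R C]
  {𝔪 : Ideal C} {m n : ℕ} {a : σ → C}

theorem truncTotal_coe_truncTotal_of_le (h : m ≤ n) (F : MvPowerSeries σ R) :
    truncTotal m (truncTotal n F : MvPowerSeries σ R) = truncTotal m F := by
  ext d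
  simp only [coeff_truncTotal_eq_ite, MvPolynomial.coeff_coe]
  split_ifs with hd <;> first | rfl | omega

theorem truncTotal_coe_truncTotal_mul (F G : MvPowerSeries σ R) :
    truncTotal n ((truncTotal n F * truncTotal n G : MvPolynomial σ R) : MvPowerSeries σ R) =
      truncTotal n (F * G) := by
  ext d
  simp only [coeff_truncTotal_eq_ite, MvPolynomial.coeff_coe]
  split_ifs with hd
  · exact coeff_truncTotal_mul_truncTotal_eq_coeff_mul F G hd
  · rfl

theorem aeval_truncTotal_coe (ha : ∀ i, a i ∈ 𝔪) (hn : 𝔪 ^ n = ⊥) (p : MvPolynomial σ R) :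
    MvPolynomial.aeval a (truncTotal n (p : MvPowerSeries σ R)) = MvPolynomial.aeval a p := by
  rw [← sub_eq_zero, ← map_sub]
  refine MvPolynomial.aeval_eq_zero_of_le_degree ha hn fun d hd => not_lt.1 fun hlt => ?_
  rw [MvPolynomial.mem_support_iff, MvPolynomial.coeff_sub, coeff_truncTotal _ hlt,
    MvPolynomial.coeff_coe, sub_self] at hd
  exact hd rfl

noncomputable def truncEval (ha : ∀ i, a i ∈ 𝔪) (hn : 𝔪 ^ n = ⊥) :
    MvPowerSeries σ R →ₐ[R] C where
  toFun F := MvPolynomial.aeval a (truncTotal n F)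
  map_one' := by rw [← MvPolynomial.coe_one, aeval_truncTotal_coe ha hn, map_one]
  map_mul' F G := by
    rw [← truncTotal_coe_truncTotal_mul, aeval_truncTotal_coe ha hn, map_mul]
  map_zero' := by rw [map_zero, map_zero]
  map_add' F G := by rw [map_add, map_add]
  commutes' r := by
    rw [algebraMap_apply, Algebra.algebraMap_self, RingHom.id_apply, ← MvPolynomial.coe_C,
      aeval_truncTotal_coe ha hn, MvPolynomial.aeval_C]

variable (ha : ∀ i, a i ∈ 𝔪) (hn : 𝔪 ^ n = ⊥)

theorem truncEval_apply (F : MvPowerSeries σ R) :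
    truncEval ha hn F = MvPolynomial.aeval a (truncTotal n F) := rfl

theorem truncEval_coe (p : MvPolynomial σ R) :
    truncEval ha hn (p : MvPowerSeries σ R) = MvPolynomial.aeval a p :=
  aeval_truncTotal_coe ha hn p

theorem truncEval_X (i : σ) : truncEval ha hn (X i : MvPowerSeries σ R) = a i := by
  rw [← MvPolynomial.coe_X, truncEval_coe, MvPolynomial.aeval_X]

theorem orderIdeal_le_ker_truncEval : orderIdeal σ R n ≤ RingHom.ker (truncEval ha hn) := by
  intro F hF
  have : truncTotal n F = 0 := by
    ext d
    rw [coeff_truncTotal_eq_ite, MvPolynomial.coeff_zero]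
    split_ifs with hd
    · exact mem_orderIdeal_iff_coeff.1 hF d hd
    · rfl
  rw [RingHom.mem_ker, truncEval_apply, this, map_zero]

theorem comp_truncEval {D : Type*} [CommRing D] [Algebra R D] {𝔫 : Ideal D} (φ : C →ₐ[R] D)
    {b : σ → D} (hab : ∀ i, φ (a i) = b i) (hb : ∀ i, b i ∈ 𝔫) (hm : 𝔫 ^ m = ⊥) (hmn : m ≤ n) :
    φ.comp (truncEval ha hn) = truncEval hb hm := by
  ext F
  rw [AlgHom.comp_apply, truncEval_apply, truncEval_apply, MvPolynomial.comp_aeval_apply,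
    ← truncTotal_coe_truncTotal_of_le hmn, funext hab, aeval_truncTotal_coe hb hm]

end TruncEval

theorem algHom_coe_eq_aeval {σ R C : Type*} [CommRing R] [CommRing C] [Algebra R C]
    (φ : MvPowerSeries σ R →ₐ[R] C) (p : MvPolynomial σ R) :
    φ p = MvPolynomial.aeval (fun i => φ (X i)) p := by
  induction p using MvPolynomial.induction_on with
  | C r => rw [MvPolynomial.aeval_C, MvPolynomial.coe_C, ← φ.commutes]; rfl
  | add p q hp hq => simp [hp, hq]
  | mul_X p i hp => simp [hp]

theorem algHom_ext_of_orderIdeal_le_ker {σ R C : Type*} [Finite σ] [CommRing R] [CommRing C]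
    [Algebra R C] {n : ℕ} {ψ₁ ψ₂ : MvPowerSeries σ R →ₐ[R] C}
    (h₁ : orderIdeal σ R n ≤ RingHom.ker ψ₁) (h₂ : orderIdeal σ R n ≤ RingHom.ker ψ₂)
    (hX : ∀ i, ψ₁ (X i) = ψ₂ (X i)) : ψ₁ = ψ₂ := by
  have htail : ∀ F, F - (truncTotal n F : MvPowerSeries σ R) ∈ orderIdeal σ R n := fun F =>
    mem_orderIdeal_iff_coeff.2 fun d hd => by
      rw [map_sub, MvPolynomial.coeff_coe, coeff_truncTotal _ hd, sub_self]
  ext F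
  have e₁ := h₁ (htail F)
  have e₂ := h₂ (htail F)
  rw [RingHom.mem_ker, map_sub, sub_eq_zero] at e₁ e₂
  rw [e₁, e₂, algHom_coe_eq_aeval, algHom_coe_eq_aeval]
  simp only [hX]

end MvPowerSeries

namespace AdicCompletion

open MvPowerSeries

variable {R A : Type*} [CommRing R] [CommRing A] [Algebra R A] {𝔪 : Ideal A}

theorem factorₐ_evalₐ {m n : ℕ} (h : m ≤ n) (c : AdicCompletion 𝔪 A) :
    Ideal.Quotient.factorₐ R (Ideal.pow_le_pow_right h) (evalₐ 𝔪 n c) = evalₐ 𝔪 m c := by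
  obtain ⟨s, rfl⟩ := mk_surjective 𝔪 A c
  rw [evalₐ_mk, evalₐ_mk, Ideal.Quotient.factorₐ_apply, Ideal.Quotient.factor_mk]
  exact Ideal.mk_eq_mk 𝔪 h s

variable {σ : Type*} (θ : ∀ n, MvPowerSeries σ R →ₐ[R] A ⧸ 𝔪 ^ n)
  (hθ : ∀ {m n : ℕ} (hmn : m ≤ n),
    (Ideal.Quotient.factorₐ R (Ideal.pow_le_pow_right hmn)).comp (θ n) = θ m)
  {K : Ideal (MvPowerSeries σ R)}

theorem ker_liftAlgHom (hker : ∀ n, RingHom.ker (θ n) = K ⊔ orderIdeal σ R n) :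
    RingHom.ker (liftAlgHom 𝔪 θ hθ) = ⨅ n, (K ⊔ orderIdeal σ R n) := by
  ext F
  simp only [Ideal.mem_iInf, ← hker, RingHom.mem_ker]
  exact ⟨fun h n => by rw [← evalₐ_liftAlgHom 𝔪 θ hθ, h, _root_.map_zero],
    fun h => ext_evalₐ fun n => by rw [evalₐ_liftAlgHom, h, _root_.map_zero]⟩

theorem liftAlgHom_surjective (hker : ∀ n, RingHom.ker (θ n) = K ⊔ orderIdeal σ R n)
    (hsurj : ∀ n, Function.Surjective (θ n)) :
    Function.Surjective (liftAlgHom 𝔪 θ hθ) := by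
  intro c
  choose F hF using fun n => hsurj n (evalₐ 𝔪 n c)
  have hstep : ∀ n, F (n + 1) - F n ∈ K ⊔ orderIdeal σ R n := fun n => by
    have h : θ n (F (n + 1)) = evalₐ 𝔪 n c := by
      rw [← hθ n.le_succ, AlgHom.comp_apply, hF, factorₐ_evalₐ n.le_succ]
    rw [← hker, RingHom.mem_ker, map_sub, h, hF, sub_self]
  obtain ⟨G, hG⟩ := exists_forall_sub_mem_sup_orderIdeal K F hstep
  refine ⟨G, ext_evalₐ fun n => ?_⟩
  have := hG n
  rw [← hker, RingHom.mem_ker, map_sub, sub_eq_zero, hF] at this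
  rw [evalₐ_liftAlgHom, this]

end AdicCompletion

namespace Polynomial

variable {R C : Type*} [CommRing R] [CommRing C] [Algebra R C] {𝔪 : Ideal C} {n : ℕ} {z : C}
  (U : R[X])

theorem aeval_mul_sub_aeval_mul_mem (hz : z ∈ 𝔪) {x y : C} {r : ℕ} (h : x - y ∈ 𝔪 ^ r) :
    aeval (z * x) U - aeval (z * y) U ∈ 𝔪 ^ (r + 1) := by
  have hdvd : z * x - z * y ∣ aeval (z * x) U - aeval (z * y) U := by
    simpa only [aeval_def, eval₂_eq_eval_map] using sub_dvd_eval_sub (z * x) (z * y) _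
  refine Ideal.mem_of_dvd _ hdvd ?_
  rw [← mul_sub, pow_succ']
  exact Ideal.mul_mem_mul hz h

theorem exists_eq_aeval_mul (hz : z ∈ 𝔪) (hn : 𝔪 ^ n = ⊥) : ∃ ω, ω = aeval (z * ω) U := by
  set f : C → C := fun w => aeval (z * w) U
  have hstep : ∀ r, f (f^[r] 0) - f^[r] 0 ∈ 𝔪 ^ r := by
    intro r
    induction r with
    | zero => simp
    | succ r ih =>
      rw [Function.iterate_succ_apply']
      exact aeval_mul_sub_aeval_mul_mem U hz ih
  refine ⟨f^[n] 0, (sub_eq_zero.1 ?_).symm⟩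
  simpa [hn] using hstep n

theorem eq_of_eq_aeval_mul (hz : z ∈ 𝔪) (hn : 𝔪 ^ n = ⊥) {ω ω' : C}
    (h : ω = aeval (z * ω) U) (h' : ω' = aeval (z * ω') U) : ω = ω' := by
  have hmem : ∀ r, ω - ω' ∈ 𝔪 ^ r := by
    intro r
    induction r with
    | zero => simp
    | succ r ih => rw [h, h']; exact aeval_mul_sub_aeval_mul_mem U hz ih
  have := hmem n
  rwa [hn, Ideal.mem_bot, sub_eq_zero] at this

theorem isUnit_aeval_of_isNilpotent (hU : IsUnit (U.coeff 0)) {x : C} (hx : IsNilpotent x) :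
    IsUnit (aeval x U) :=
  isUnit_aeval_of_isUnit_aeval_of_isNilpotent_sub
    (by rw [← coeff_zero_eq_aeval_zero']; exact hU.map _) (by rwa [sub_zero])

end Polynomial

section

variable {k : Type*} [Field k] (U₁ U₂ : Polynomial k)

noncomputable def r₂Poly : MvPolynomial (Fin 3) k :=
  (X 2)^2 + X 0 * X 1 * X 2
    + (X 0)^2 * (X 1 * Polynomial.aeval (X 1) U₂)
    + (X 1)^2 * (X 0 * Polynomial.aeval (X 0) U₁)

variable (k) in
noncomputable def d₄Poly : MvPolynomial (Fin 3) k :=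
  X 2 ^ 2 + X 0 * X 1 * X 2 + X 0 ^ 2 * X 1 + X 0 * X 1 ^ 2

theorem aeval_r₂Poly {C : Type*} [CommRing C] [Algebra k C] (x y : Fin 3 → C)
    (h₀ : x 0 = y 0 * Polynomial.aeval (x 0) U₁) (h₁ : x 1 = y 1 * Polynomial.aeval (x 1) U₂)
    (h₂ : x 2 = y 2 * Polynomial.aeval (x 0) U₁ * Polynomial.aeval (x 1) U₂) :
    aeval x (r₂Poly U₁ U₂) =
      (Polynomial.aeval (x 0) U₁ * Polynomial.aeval (x 1) U₂) ^ 2 * aeval y (d₄Poly k) := by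
  simp only [r₂Poly, d₄Poly, map_add, map_mul, map_pow, ← Polynomial.aeval_algHom_apply, aeval_X]
  generalize Polynomial.aeval (x 0) U₁ = u₁ at *
  generalize Polynomial.aeval (x 1) U₂ = u₂ at *
  rw [h₀, h₁, h₂]
  ring

variable (k) in
noncomputable def d₄Series : MvPowerSeries (Fin 3) k := d₄Poly k

theorem d₄Series_eq : d₄Series k =
    (MvPowerSeries.X 2)^2 + MvPowerSeries.X 0 * MvPowerSeries.X 1 * MvPowerSeries.X 2
      + (MvPowerSeries.X 0)^2 * MvPowerSeries.X 1 + MvPowerSeries.X 0 * (MvPowerSeries.X 1)^2 := by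
  simp [d₄Series, d₄Poly]

theorem d₄Series_ne_zero : d₄Series k ≠ 0 := by
  intro h
  have := congr(aeval (![0, 0, 1] : Fin 3 → k) $(MvPolynomial.coe_eq_zero_iff.1 h))
  simp [d₄Poly] at this

/- A type synonym rather than an abbreviation, because for the abbreviation instance search fails
to find `IsTwoSided` for ideals of `R₂ ⧸ 𝔪 ^ n`. Declaring the instances through `inferInstanceAs`
keeps `Module R₂ R₂` visible to `AdicCompletion`. -/
def R₂ := MvPolynomial (Fin 3) k ⧸ Ideal.span {r₂Poly U₁ U₂}

noncomputable instance : CommRing (R₂ U₁ U₂) :=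
  inferInstanceAs (CommRing (MvPolynomial (Fin 3) k ⧸ Ideal.span {r₂Poly U₁ U₂}))

noncomputable instance : Algebra k (R₂ U₁ U₂) :=
  inferInstanceAs (Algebra k (MvPolynomial (Fin 3) k ⧸ Ideal.span {r₂Poly U₁ U₂}))

namespace R₂

noncomputable def mk : MvPolynomial (Fin 3) k →ₐ[k] R₂ U₁ U₂ := Ideal.Quotient.mkₐ k _

theorem mk_r₂Poly : mk U₁ U₂ (r₂Poly U₁ U₂) = 0 :=
  Ideal.Quotient.eq_zero_iff_mem.2 (Ideal.mem_span_singleton_self _)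

noncomputable def maxIdeal : Ideal (R₂ U₁ U₂) :=
  Ideal.span {mk U₁ U₂ (X 0), mk U₁ U₂ (X 1), mk U₁ U₂ (X 2)}

variable (n : ℕ)

abbrev Trunc := R₂ U₁ U₂ ⧸ maxIdeal U₁ U₂ ^ n

noncomputable def mkTrunc : MvPolynomial (Fin 3) k →ₐ[k] Trunc U₁ U₂ n :=
  (Ideal.Quotient.mkₐ k _).comp (mk U₁ U₂)

noncomputable def x (i : Fin 3) : Trunc U₁ U₂ n := mkTrunc U₁ U₂ n (X i)

noncomputable def truncMaxIdeal : Ideal (Trunc U₁ U₂ n) :=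
  (maxIdeal U₁ U₂).map (Ideal.Quotient.mk _)

theorem truncMaxIdeal_pow : truncMaxIdeal U₁ U₂ n ^ n = ⊥ :=
  Ideal.map_mk_pow_self_pow_eq_bot _ n

theorem x_mem (i : Fin 3) : x U₁ U₂ n i ∈ truncMaxIdeal U₁ U₂ n :=
  Ideal.mem_map_of_mem _ (Ideal.subset_span (by fin_cases i <;> simp))

noncomputable def u₁ : Trunc U₁ U₂ n := Polynomial.aeval (x U₁ U₂ n 0) U₁

noncomputable def u₂ : Trunc U₁ U₂ n := Polynomial.aeval (x U₁ U₂ n 1) U₂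

/- The coordinates `x₀ / u₁`, `x₁ / u₂`, `x₂ / (u₁ u₂)`; `Ring.inverse` is `0` on non-units, so
they are meaningful only when `Uᵢ(0) ≠ 0`. -/
noncomputable def x' : Fin 3 → Trunc U₁ U₂ n :=
  ![x U₁ U₂ n 0 * Ring.inverse (u₁ U₁ U₂ n), x U₁ U₂ n 1 * Ring.inverse (u₂ U₁ U₂ n),
    x U₁ U₂ n 2 * Ring.inverse (u₁ U₁ U₂ n) * Ring.inverse (u₂ U₁ U₂ n)]

theorem x'_zero : x' U₁ U₂ n 0 = x U₁ U₂ n 0 * Ring.inverse (u₁ U₁ U₂ n) := rfl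

theorem x'_one : x' U₁ U₂ n 1 = x U₁ U₂ n 1 * Ring.inverse (u₂ U₁ U₂ n) := rfl

theorem x'_two :
    x' U₁ U₂ n 2 = x U₁ U₂ n 2 * Ring.inverse (u₁ U₁ U₂ n) * Ring.inverse (u₂ U₁ U₂ n) := rfl

theorem x'_mem (i : Fin 3) : x' U₁ U₂ n i ∈ truncMaxIdeal U₁ U₂ n := by
  fin_cases i <;> simp only [x'] <;> refine Ideal.mul_mem_right _ _ ?_
  · exact x_mem U₁ U₂ n 0
  · exact x_mem U₁ U₂ n 1
  · exact Ideal.mul_mem_right _ _ (x_mem U₁ U₂ n 2)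

noncomputable def toTrunc : MvPowerSeries (Fin 3) k →ₐ[k] Trunc U₁ U₂ n :=
  MvPowerSeries.truncEval (x'_mem U₁ U₂ n) (truncMaxIdeal_pow U₁ U₂ n)

theorem isUnit_u₁ (hU₁ : U₁.coeff 0 ≠ 0) : IsUnit (u₁ U₁ U₂ n) :=
  Polynomial.isUnit_aeval_of_isNilpotent U₁ (isUnit_iff_ne_zero.2 hU₁)
    (isNilpotent_of_mem_pow_eq_bot (x_mem U₁ U₂ n 0) (truncMaxIdeal_pow U₁ U₂ n))

theorem isUnit_u₂ (hU₂ : U₂.coeff 0 ≠ 0) : IsUnit (u₂ U₁ U₂ n) :=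
  Polynomial.isUnit_aeval_of_isNilpotent U₂ (isUnit_iff_ne_zero.2 hU₂)
    (isNilpotent_of_mem_pow_eq_bot (x_mem U₁ U₂ n 1) (truncMaxIdeal_pow U₁ U₂ n))

theorem aeval_x_r₂Poly : aeval (x U₁ U₂ n) (r₂Poly U₁ U₂) = 0 := by
  rw [show x U₁ U₂ n = mkTrunc U₁ U₂ n ∘ X from rfl, ← MvPolynomial.aeval_unique, mkTrunc,
    AlgHom.comp_apply, mk_r₂Poly, map_zero]

theorem x_zero_eq (hU₁ : U₁.coeff 0 ≠ 0) : x U₁ U₂ n 0 = x' U₁ U₂ n 0 * u₁ U₁ U₂ n := by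
  rw [x'_zero]
  linear_combination (-x U₁ U₂ n 0) * Ring.mul_inverse_cancel _ (isUnit_u₁ U₁ U₂ n hU₁)

theorem x_one_eq (hU₂ : U₂.coeff 0 ≠ 0) : x U₁ U₂ n 1 = x' U₁ U₂ n 1 * u₂ U₁ U₂ n := by
  rw [x'_one]
  linear_combination (-x U₁ U₂ n 1) * Ring.mul_inverse_cancel _ (isUnit_u₂ U₁ U₂ n hU₂)

theorem x_two_eq (hU₁ : U₁.coeff 0 ≠ 0) (hU₂ : U₂.coeff 0 ≠ 0) :
    x U₁ U₂ n 2 = x' U₁ U₂ n 2 * u₁ U₁ U₂ n * u₂ U₁ U₂ n := by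
  rw [x'_two]
  linear_combination (-x U₁ U₂ n 2 * u₂ U₁ U₂ n * Ring.inverse (u₂ U₁ U₂ n)) *
    Ring.mul_inverse_cancel _ (isUnit_u₁ U₁ U₂ n hU₁) -
      x U₁ U₂ n 2 * Ring.mul_inverse_cancel _ (isUnit_u₂ U₁ U₂ n hU₂)

theorem aeval_x'_d₄Poly (hU₁ : U₁.coeff 0 ≠ 0) (hU₂ : U₂.coeff 0 ≠ 0) :
    aeval (x' U₁ U₂ n) (d₄Poly k) = 0 := by
  have := aeval_r₂Poly U₁ U₂ (x U₁ U₂ n) (x' U₁ U₂ n) (x_zero_eq U₁ U₂ n hU₁)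
    (x_one_eq U₁ U₂ n hU₂) (x_two_eq U₁ U₂ n hU₁ hU₂)
  rw [aeval_x_r₂Poly] at this
  exact (((isUnit_u₁ U₁ U₂ n hU₁).mul (isUnit_u₂ U₁ U₂ n hU₂)).pow 2).mul_right_eq_zero.1
    this.symm

end R₂

variable (k) in
abbrev D₄Trunc (n : ℕ) :=
  MvPowerSeries (Fin 3) k ⧸
    (Ideal.span {d₄Series k} ⊔
      MvPowerSeries.orderIdeal (Fin 3) k n)

namespace D₄Trunc

variable (n : ℕ)

variable (k) in
noncomputable def mk : MvPowerSeries (Fin 3) k →ₐ[k] D₄Trunc k n := Ideal.Quotient.mkₐ k _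

noncomputable def y (i : Fin 3) : D₄Trunc k n := mk k n (MvPowerSeries.X i)

variable (k) in
noncomputable def maxIdeal : Ideal (D₄Trunc k n) :=
  (MvPowerSeries.orderIdeal (Fin 3) k 1).map (mk k n)

theorem maxIdeal_pow : maxIdeal k n ^ n = ⊥ := by
  rw [maxIdeal, ← Ideal.map_pow, Ideal.map_eq_bot_iff_le_ker]
  exact fun F hF => Ideal.Quotient.eq_zero_iff_mem.2
    (Ideal.mem_sup_right (MvPowerSeries.orderIdeal_one_pow_le n hF))

theorem y_mem (i : Fin 3) : y n i ∈ maxIdeal k n :=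
  Ideal.mem_map_of_mem _ (MvPowerSeries.X_mem_orderIdeal_one i)

theorem aeval_y_d₄Poly : aeval (y (k := k) n) (d₄Poly k) = 0 := by
  rw [show y n = fun i => mk k n (MvPowerSeries.X i) from rfl,
    ← MvPowerSeries.algHom_coe_eq_aeval, mk, Ideal.Quotient.mkₐ_eq_mk,
    Ideal.Quotient.eq_zero_iff_mem]
  exact Ideal.mem_sup_left (Ideal.mem_span_singleton_self _)

end D₄Trunc

namespace R₂

variable (n : ℕ)

noncomputable def lift {C : Type*} [CommRing C] [Algebra k C]
    (φ : MvPolynomial (Fin 3) k →ₐ[k] C) (hφ : φ (r₂Poly U₁ U₂) = 0) : R₂ U₁ U₂ →ₐ[k] C :=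
  Ideal.Quotient.liftₐ _ φ fun p hp => by
    obtain ⟨c, rfl⟩ := Ideal.mem_span_singleton'.1 hp
    rw [map_mul, hφ, mul_zero]

theorem lift_mk {C : Type*} [CommRing C] [Algebra k C] (φ : MvPolynomial (Fin 3) k →ₐ[k] C)
    (hφ : φ (r₂Poly U₁ U₂) = 0) (p : MvPolynomial (Fin 3) k) :
    lift U₁ U₂ φ hφ (mk U₁ U₂ p) = φ p := rfl

theorem trunc_algHom_ext {C : Type*} [CommRing C] [Algebra k C] {φ ψ : Trunc U₁ U₂ n →ₐ[k] C}
    (h : ∀ i, φ (x U₁ U₂ n i) = ψ (x U₁ U₂ n i)) : φ = ψ :=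
  Ideal.Quotient.algHom_ext k (Ideal.Quotient.algHom_ext k (MvPolynomial.algHom_ext h))

/- `ω₁ = U₁(v₀)` for the solution `v₀ = y₀ ω₁` of `v₀ = y₀ U₁(v₀)`; this is how `v` below
inverts the substitution `x ↦ x'`. -/
noncomputable def ω₁ : D₄Trunc k n :=
  (Polynomial.exists_eq_aeval_mul U₁ (D₄Trunc.y_mem n 0) (D₄Trunc.maxIdeal_pow n)).choose

theorem ω₁_spec : ω₁ U₁ n = Polynomial.aeval (D₄Trunc.y n 0 * ω₁ U₁ n) U₁ :=
  (Polynomial.exists_eq_aeval_mul U₁ (D₄Trunc.y_mem n 0) (D₄Trunc.maxIdeal_pow n)).choose_spec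

noncomputable def ω₂ : D₄Trunc k n :=
  (Polynomial.exists_eq_aeval_mul U₂ (D₄Trunc.y_mem n 1) (D₄Trunc.maxIdeal_pow n)).choose

theorem ω₂_spec : ω₂ U₂ n = Polynomial.aeval (D₄Trunc.y n 1 * ω₂ U₂ n) U₂ :=
  (Polynomial.exists_eq_aeval_mul U₂ (D₄Trunc.y_mem n 1) (D₄Trunc.maxIdeal_pow n)).choose_spec

noncomputable def v : Fin 3 → D₄Trunc k n :=
  ![D₄Trunc.y n 0 * ω₁ U₁ n, D₄Trunc.y n 1 * ω₂ U₂ n, D₄Trunc.y n 2 * ω₁ U₁ n * ω₂ U₂ n]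

theorem v_zero : v U₁ U₂ n 0 = D₄Trunc.y n 0 * ω₁ U₁ n := rfl

theorem v_one : v U₁ U₂ n 1 = D₄Trunc.y n 1 * ω₂ U₂ n := rfl

theorem v_two : v U₁ U₂ n 2 = D₄Trunc.y n 2 * ω₁ U₁ n * ω₂ U₂ n := rfl

theorem v_mem (i : Fin 3) : v U₁ U₂ n i ∈ D₄Trunc.maxIdeal k n := by
  fin_cases i <;> simp only [v] <;> refine Ideal.mul_mem_right _ _ ?_
  · exact D₄Trunc.y_mem n 0
  · exact D₄Trunc.y_mem n 1
  · exact Ideal.mul_mem_right _ _ (D₄Trunc.y_mem n 2)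

theorem aeval_v_r₂Poly : aeval (v U₁ U₂ n) (r₂Poly U₁ U₂) = 0 := by
  have h₁ : Polynomial.aeval (v U₁ U₂ n 0) U₁ = ω₁ U₁ n := (ω₁_spec U₁ n).symm
  have h₂ : Polynomial.aeval (v U₁ U₂ n 1) U₂ = ω₂ U₂ n := (ω₂_spec U₂ n).symm
  rw [aeval_r₂Poly U₁ U₂ (v U₁ U₂ n) (D₄Trunc.y n) (by rw [h₁]; rfl) (by rw [h₂]; rfl)
    (by rw [h₁, h₂]; rfl), D₄Trunc.aeval_y_d₄Poly, mul_zero]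

noncomputable def toD₄Trunc : Trunc U₁ U₂ n →ₐ[k] D₄Trunc k n :=
  Ideal.Quotient.liftₐ _ (lift U₁ U₂ (aeval (v U₁ U₂ n)) (aeval_v_r₂Poly U₁ U₂ n)) fun _ hz =>
    RingHom.mem_ker.1 <| Ideal.pow_le_ker_of_le_comap _ (Ideal.span_le.2 (by
      simp only [Set.insert_subset_iff, Set.singleton_subset_iff, SetLike.mem_coe,
        Ideal.mem_comap, lift_mk, aeval_X]
      exact ⟨v_mem U₁ U₂ n 0, v_mem U₁ U₂ n 1, v_mem U₁ U₂ n 2⟩))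
      (D₄Trunc.maxIdeal_pow n) hz

theorem toD₄Trunc_x (i : Fin 3) : toD₄Trunc U₁ U₂ n (x U₁ U₂ n i) = v U₁ U₂ n i :=
  aeval_X _ i

theorem toD₄Trunc_u₁ : toD₄Trunc U₁ U₂ n (u₁ U₁ U₂ n) = ω₁ U₁ n := by
  rw [u₁, ← Polynomial.aeval_algHom_apply, toD₄Trunc_x]
  exact (ω₁_spec U₁ n).symm

theorem toD₄Trunc_u₂ : toD₄Trunc U₁ U₂ n (u₂ U₁ U₂ n) = ω₂ U₂ n := by
  rw [u₂, ← Polynomial.aeval_algHom_apply, toD₄Trunc_x]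
  exact (ω₂_spec U₂ n).symm

theorem toD₄Trunc_comp_toTrunc (hU₁ : U₁.coeff 0 ≠ 0) (hU₂ : U₂.coeff 0 ≠ 0) :
    (toD₄Trunc U₁ U₂ n).comp (toTrunc U₁ U₂ n) = D₄Trunc.mk k n := by
  refine MvPowerSeries.algHom_ext_of_orderIdeal_le_ker (n := n)
    (fun F hF => ?_) (fun F hF => ?_) fun i => ?_
  · have : toTrunc U₁ U₂ n F = 0 := MvPowerSeries.orderIdeal_le_ker_truncEval _ _ hF
    rw [RingHom.mem_ker, AlgHom.comp_apply, this, map_zero]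
  · exact Ideal.Quotient.eq_zero_iff_mem.2 (Ideal.mem_sup_right hF)
  · rw [AlgHom.comp_apply, toTrunc, MvPowerSeries.truncEval_X]
    have h₁ : ω₁ U₁ n * toD₄Trunc U₁ U₂ n (Ring.inverse (u₁ U₁ U₂ n)) = 1 := by
      rw [← toD₄Trunc_u₁, ← map_mul, Ring.mul_inverse_cancel _ (isUnit_u₁ U₁ U₂ n hU₁), map_one]
    have h₂ : ω₂ U₂ n * toD₄Trunc U₁ U₂ n (Ring.inverse (u₂ U₁ U₂ n)) = 1 := by
      rw [← toD₄Trunc_u₂, ← map_mul, Ring.mul_inverse_cancel _ (isUnit_u₂ U₁ U₂ n hU₂), map_one]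
    fin_cases i
    · change toD₄Trunc U₁ U₂ n (x' U₁ U₂ n 0) = D₄Trunc.y n 0
      rw [x'_zero, map_mul, toD₄Trunc_x, v_zero]
      linear_combination D₄Trunc.y n 0 * h₁
    · change toD₄Trunc U₁ U₂ n (x' U₁ U₂ n 1) = D₄Trunc.y n 1
      rw [x'_one, map_mul, toD₄Trunc_x, v_one]
      linear_combination D₄Trunc.y n 1 * h₂
    · change toD₄Trunc U₁ U₂ n (x' U₁ U₂ n 2) = D₄Trunc.y n 2
      rw [x'_two, map_mul, map_mul, toD₄Trunc_x, v_two]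
      linear_combination
        D₄Trunc.y n 2 * ω₂ U₂ n * toD₄Trunc U₁ U₂ n (Ring.inverse (u₂ U₁ U₂ n)) * h₁ +
          D₄Trunc.y n 2 * h₂

theorem le_ker_toTrunc (hU₁ : U₁.coeff 0 ≠ 0) (hU₂ : U₂.coeff 0 ≠ 0) :
    Ideal.span {d₄Series k} ⊔
      MvPowerSeries.orderIdeal (Fin 3) k n ≤ RingHom.ker (toTrunc U₁ U₂ n) := by
  refine sup_le (Ideal.span_le.2 (Set.singleton_subset_iff.2 ?_))
    (MvPowerSeries.orderIdeal_le_ker_truncEval _ _)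
  rw [SetLike.mem_coe, RingHom.mem_ker, toTrunc, d₄Series, MvPowerSeries.truncEval_coe]
  exact aeval_x'_d₄Poly U₁ U₂ n hU₁ hU₂

noncomputable def ofD₄Trunc (hU₁ : U₁.coeff 0 ≠ 0) (hU₂ : U₂.coeff 0 ≠ 0) :
    D₄Trunc k n →ₐ[k] Trunc U₁ U₂ n :=
  Ideal.Quotient.liftₐ _ (toTrunc U₁ U₂ n) fun _ hF =>
    RingHom.mem_ker.1 (le_ker_toTrunc U₁ U₂ n hU₁ hU₂ hF)

theorem ofD₄Trunc_comp_mk (hU₁ : U₁.coeff 0 ≠ 0) (hU₂ : U₂.coeff 0 ≠ 0) :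
    (ofD₄Trunc U₁ U₂ n hU₁ hU₂).comp (D₄Trunc.mk k n) = toTrunc U₁ U₂ n :=
  Ideal.Quotient.liftₐ_comp _ _ _

theorem ofD₄Trunc_y (hU₁ : U₁.coeff 0 ≠ 0) (hU₂ : U₂.coeff 0 ≠ 0) (i : Fin 3) :
    ofD₄Trunc U₁ U₂ n hU₁ hU₂ (D₄Trunc.y n i) = x' U₁ U₂ n i :=
  MvPowerSeries.truncEval_X (x'_mem U₁ U₂ n) (truncMaxIdeal_pow U₁ U₂ n) i

theorem ofD₄Trunc_ω₁ (hU₁ : U₁.coeff 0 ≠ 0) (hU₂ : U₂.coeff 0 ≠ 0) :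
    ofD₄Trunc U₁ U₂ n hU₁ hU₂ (ω₁ U₁ n) = u₁ U₁ U₂ n := by
  refine Polynomial.eq_of_eq_aeval_mul U₁ (x'_mem U₁ U₂ n 0) (truncMaxIdeal_pow U₁ U₂ n) ?_ ?_
  · conv_lhs => rw [ω₁_spec]
    rw [← Polynomial.aeval_algHom_apply, map_mul, ofD₄Trunc_y]
  · rw [← x_zero_eq U₁ U₂ n hU₁]; rfl

theorem ofD₄Trunc_ω₂ (hU₁ : U₁.coeff 0 ≠ 0) (hU₂ : U₂.coeff 0 ≠ 0) :
    ofD₄Trunc U₁ U₂ n hU₁ hU₂ (ω₂ U₂ n) = u₂ U₁ U₂ n := by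
  refine Polynomial.eq_of_eq_aeval_mul U₂ (x'_mem U₁ U₂ n 1) (truncMaxIdeal_pow U₁ U₂ n) ?_ ?_
  · conv_lhs => rw [ω₂_spec]
    rw [← Polynomial.aeval_algHom_apply, map_mul, ofD₄Trunc_y]
  · rw [← x_one_eq U₁ U₂ n hU₂]; rfl

theorem ofD₄Trunc_comp_toD₄Trunc (hU₁ : U₁.coeff 0 ≠ 0) (hU₂ : U₂.coeff 0 ≠ 0) :
    (ofD₄Trunc U₁ U₂ n hU₁ hU₂).comp (toD₄Trunc U₁ U₂ n) = AlgHom.id k _ := by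
  refine trunc_algHom_ext U₁ U₂ n fun i => ?_
  rw [AlgHom.comp_apply, toD₄Trunc_x, AlgHom.id_apply]
  fin_cases i
  · change ofD₄Trunc U₁ U₂ n hU₁ hU₂ (v U₁ U₂ n 0) = x U₁ U₂ n 0
    rw [v_zero, map_mul, ofD₄Trunc_y, ofD₄Trunc_ω₁, ← x_zero_eq U₁ U₂ n hU₁]
  · change ofD₄Trunc U₁ U₂ n hU₁ hU₂ (v U₁ U₂ n 1) = x U₁ U₂ n 1
    rw [v_one, map_mul, ofD₄Trunc_y, ofD₄Trunc_ω₂, ← x_one_eq U₁ U₂ n hU₂]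
  · change ofD₄Trunc U₁ U₂ n hU₁ hU₂ (v U₁ U₂ n 2) = x U₁ U₂ n 2
    rw [v_two, map_mul, map_mul, ofD₄Trunc_y, ofD₄Trunc_ω₁, ofD₄Trunc_ω₂,
      ← x_two_eq U₁ U₂ n hU₁ hU₂]

theorem toD₄Trunc_comp_ofD₄Trunc (hU₁ : U₁.coeff 0 ≠ 0) (hU₂ : U₂.coeff 0 ≠ 0) :
    (toD₄Trunc U₁ U₂ n).comp (ofD₄Trunc U₁ U₂ n hU₁ hU₂) = AlgHom.id k _ :=
  Ideal.Quotient.algHom_ext k (by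
    change (toD₄Trunc U₁ U₂ n).comp ((ofD₄Trunc U₁ U₂ n hU₁ hU₂).comp (D₄Trunc.mk k n)) =
      (AlgHom.id k _).comp (D₄Trunc.mk k n)
    rw [ofD₄Trunc_comp_mk, toD₄Trunc_comp_toTrunc U₁ U₂ n hU₁ hU₂, AlgHom.id_comp])

theorem ker_toTrunc (hU₁ : U₁.coeff 0 ≠ 0) (hU₂ : U₂.coeff 0 ≠ 0) : RingHom.ker (toTrunc U₁ U₂ n) =
    Ideal.span {d₄Series k} ⊔
      MvPowerSeries.orderIdeal (Fin 3) k n := by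
  have hinj : Function.Injective (ofD₄Trunc U₁ U₂ n hU₁ hU₂) :=
    Function.LeftInverse.injective (g := toD₄Trunc U₁ U₂ n)
      fun z => congr($(toD₄Trunc_comp_ofD₄Trunc U₁ U₂ n hU₁ hU₂) z)
  ext F
  rw [RingHom.mem_ker, ← ofD₄Trunc_comp_mk U₁ U₂ n hU₁ hU₂, AlgHom.comp_apply,
    map_eq_zero_iff _ hinj, D₄Trunc.mk, Ideal.Quotient.mkₐ_eq_mk, Ideal.Quotient.eq_zero_iff_mem]

theorem toTrunc_surjective (hU₁ : U₁.coeff 0 ≠ 0) (hU₂ : U₂.coeff 0 ≠ 0) :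
    Function.Surjective (toTrunc U₁ U₂ n) := by
  rw [← ofD₄Trunc_comp_mk U₁ U₂ n hU₁ hU₂, AlgHom.coe_comp]
  exact (Function.RightInverse.surjective (f := ofD₄Trunc U₁ U₂ n hU₁ hU₂) (g := toD₄Trunc U₁ U₂ n)
    fun z => congr($(ofD₄Trunc_comp_toD₄Trunc U₁ U₂ n hU₁ hU₂) z)).comp
    Ideal.Quotient.mk_surjective

theorem factorₐ_comp_toTrunc (hU₁ : U₁.coeff 0 ≠ 0) (hU₂ : U₂.coeff 0 ≠ 0) {m : ℕ} (hmn : m ≤ n) :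
    (Ideal.Quotient.factorₐ k (Ideal.pow_le_pow_right hmn)).comp (toTrunc U₁ U₂ n) =
      toTrunc U₁ U₂ m := by
  set φ := Ideal.Quotient.factorₐ k (Ideal.pow_le_pow_right (I := maxIdeal U₁ U₂) hmn)
  have hx : ∀ i, φ (x U₁ U₂ n i) = x U₁ U₂ m i := fun i => rfl
  have hu₁ : φ (Ring.inverse (u₁ U₁ U₂ n)) = Ring.inverse (u₁ U₁ U₂ m) := by
    rw [map_ringInverse φ (isUnit_u₁ U₁ U₂ n hU₁), u₁, ← Polynomial.aeval_algHom_apply, hx]; rfl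
  have hu₂ : φ (Ring.inverse (u₂ U₁ U₂ n)) = Ring.inverse (u₂ U₁ U₂ m) := by
    rw [map_ringInverse φ (isUnit_u₂ U₁ U₂ n hU₂), u₂, ← Polynomial.aeval_algHom_apply, hx]; rfl
  refine MvPowerSeries.comp_truncEval _ _ φ (fun i => ?_) (x'_mem U₁ U₂ m)
    (truncMaxIdeal_pow U₁ U₂ m) hmn
  fin_cases i
  · change φ (x' U₁ U₂ n 0) = x' U₁ U₂ m 0
    rw [x'_zero, x'_zero, map_mul, hx, hu₁]
  · change φ (x' U₁ U₂ n 1) = x' U₁ U₂ m 1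
    rw [x'_one, x'_one, map_mul, hx, hu₂]
  · change φ (x' U₁ U₂ n 2) = x' U₁ U₂ m 2
    rw [x'_two, x'_two, map_mul, map_mul, hx, hu₁, hu₂]

theorem nonempty_adicCompletion_ringEquiv (hU₁ : U₁.coeff 0 ≠ 0) (hU₂ : U₂.coeff 0 ≠ 0) :
    Nonempty (AdicCompletion (maxIdeal U₁ U₂) (R₂ U₁ U₂) ≃+*
      MvPowerSeries (Fin 3) k ⧸ Ideal.span {d₄Series k}) := by
  have hθ := fun {m n : ℕ} (hmn : m ≤ n) => factorₐ_comp_toTrunc U₁ U₂ n hU₁ hU₂ hmn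
  have hker := (ker_toTrunc U₁ U₂ · hU₁ hU₂)
  have hsurj := AdicCompletion.liftAlgHom_surjective _ hθ hker
    (toTrunc_surjective U₁ U₂ · hU₁ hU₂)
  have hker' := AdicCompletion.ker_liftAlgHom _ hθ hker
  rw [MvPowerSeries.iInf_span_singleton_sup_orderIdeal d₄Series_ne_zero] at hker'
  exact ⟨((Ideal.quotEquivOfEq hker').symm.trans (RingHom.quotientKerEquivOfSurjective hsurj)).symm⟩

end R₂

end

theorem stmt14_general (k : Type*) [Field k]
    (U₁ U₂ : Polynomial k) (hU₁ : U₁.coeff 0 ≠ 0) (hU₂ : U₂.coeff 0 ≠ 0)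
    (I : Ideal (MvPolynomial (Fin 3) k))
    (hI : I = Ideal.span
      {(X 2)^2 + X 0 * X 1 * X 2
        + (X 0)^2 * (X 1 * Polynomial.aeval (X 1) U₂)
        + (X 1)^2 * (X 0 * Polynomial.aeval (X 0) U₁)})
    (m : Ideal (MvPolynomial (Fin 3) k ⧸ I))
    (hm : m = Ideal.span {Ideal.Quotient.mk I (X 0), Ideal.Quotient.mk I (X 1),
      Ideal.Quotient.mk I (X 2)})
    (J : Ideal (MvPowerSeries (Fin 3) k))
    (hJ : J = Ideal.span
      {(MvPowerSeries.X 2)^2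
        + MvPowerSeries.X 0 * MvPowerSeries.X 1 * MvPowerSeries.X 2
        + (MvPowerSeries.X 0)^2 * MvPowerSeries.X 1
        + MvPowerSeries.X 0 * (MvPowerSeries.X 1)^2}) :
    Nonempty ((AdicCompletion m (MvPolynomial (Fin 3) k ⧸ I)) ≃+*
      (MvPowerSeries (Fin 3) k ⧸ J)) := by
  subst hI hm hJ
  rw [← d₄Series_eq]
  exact R₂.nonempty_adicCompletion_ringEquiv U₁ U₂ hU₁ hU₂

set_option synthInstance.maxHeartbeats 1000000 in
/-- Over an algebraically closed field `k` of characteristic 2, let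
`R₂ = k[X₁,X₂,T]/(T² + X₁X₂T + X₁²P₂(X₂) + X₂²P₁(X₁))` with
`Pᵢ(Xᵢ) = Xᵢ·Uᵢ(Xᵢ)`, `Uᵢ(0) ≠ 0`.  Then the formal completion of `R₂` at the
maximal ideal `(X₁,X₂,T)` is isomorphic to
`k⟦X,Y,T⟧/(T² + XYT + X²Y + XY²)`, a rational double point of type `D₄¹`.
Here `X₁ = X 0`, `X₂ = X 1`, `T = X 2`. -/
theorem stmt14 (k : Type*) [Field k] [IsAlgClosed k] [CharP k 2]
    (U₁ U₂ : Polynomial k) (hU₁ : U₁.coeff 0 ≠ 0) (hU₂ : U₂.coeff 0 ≠ 0)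
    (I : Ideal (MvPolynomial (Fin 3) k))
    (hI : I = Ideal.span
      {(X 2)^2 + X 0 * X 1 * X 2
        + (X 0)^2 * (X 1 * Polynomial.aeval (X 1) U₂)
        + (X 1)^2 * (X 0 * Polynomial.aeval (X 0) U₁)})
    (m : Ideal (MvPolynomial (Fin 3) k ⧸ I))
    (hm : m = Ideal.span {Ideal.Quotient.mk I (X 0), Ideal.Quotient.mk I (X 1),
      Ideal.Quotient.mk I (X 2)})
    (J : Ideal (MvPowerSeries (Fin 3) k))
    (hJ : J = Ideal.span
      {(MvPowerSeries.X 2)^2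
        + MvPowerSeries.X 0 * MvPowerSeries.X 1 * MvPowerSeries.X 2
        + (MvPowerSeries.X 0)^2 * MvPowerSeries.X 1
        + MvPowerSeries.X 0 * (MvPowerSeries.X 1)^2}) :
    Nonempty ((AdicCompletion m (MvPolynomial (Fin 3) k ⧸ I)) ≃+*
      (MvPowerSeries (Fin 3) k ⧸ J)) :=
  stmt14_general k U₁ U₂ hU₁ hU₂ I hI m hm J hJ
end

section
/- Let k be a field of characteristic 2 with the involution ι on S = k[x_1,y_1,…,x_g,y_g] given by x_i ↦ x_i, y_i ↦ y_i + x_i. For every subset D ⊆ {1,…,g}, the relation ∑_{L ⊊ D} (∏_{i ∈ D∖L} x_i) · Tr(∏_{j∈L} y_j) = 0 holds in S, where the sum is over all proper subsets L of D. -/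
/-!
Write `a` for the `xᵢ` and `b` for the `yᵢ`. By the binomial expansion of a product over `D`,
`∑_{L ⊆ D} a^{D∖L} b^L = (a + b)^D` and `∑_{L ⊆ D} a^{D∖L} (b + a)^L = (b + 2a)^D = b^D` in
characteristic 2. Hence the sum over *all* `L ⊆ D` of `a^{D∖L} Tr(b^L)` is `(a + b)^D + b^D = Tr(b^D)`,
which is exactly the term `L = D`; the remaining terms therefore sum to zero.
-/

open MvPolynomial

namespace Finset

variable {ι R : Type*} [DecidableEq ι] [CommRing R]

theorem sum_powerset_prod_sdiff_mul_prod (a b : ι → R) (D : Finset ι) :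
    ∑ L ∈ D.powerset, (∏ i ∈ D \ L, a i) * ∏ j ∈ L, b j = ∏ j ∈ D, (b j + a j) := by
  rw [prod_add]
  exact sum_congr rfl fun _ _ => mul_comm _ _

theorem sum_powerset_prod_sdiff_mul_prod_add_self [CharP R 2] (a b : ι → R) (D : Finset ι) :
    ∑ L ∈ D.powerset, (∏ i ∈ D \ L, a i) * ∏ j ∈ L, (b j + a j) = ∏ j ∈ D, b j := by
  rw [sum_powerset_prod_sdiff_mul_prod]
  exact prod_congr rfl fun j _ => by rw [add_assoc, CharTwo.add_self_eq_zero, add_zero]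

theorem sum_powerset_prod_sdiff_mul_trace [CharP R 2] (a b : ι → R) (D : Finset ι) :
    ∑ L ∈ D.powerset, (∏ i ∈ D \ L, a i) * (∏ j ∈ L, b j + ∏ j ∈ L, (b j + a j)) =
      ∏ j ∈ D, b j + ∏ j ∈ D, (b j + a j) := by
  simp only [mul_add, sum_add_distrib]
  rw [sum_powerset_prod_sdiff_mul_prod, sum_powerset_prod_sdiff_mul_prod_add_self, add_comm]

theorem sum_ssubset_prod_sdiff_mul_trace [CharP R 2] (a b : ι → R) (D : Finset ι) :
    ∑ L ∈ D.powerset.filter (· ≠ D), (∏ i ∈ D \ L, a i) * (∏ j ∈ L, b j + ∏ j ∈ L, (b j + a j)) =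
      0 := by
  have hfull := sum_powerset_prod_sdiff_mul_trace a b D
  rw [← add_sum_erase _ _ (mem_powerset_self D)] at hfull
  rw [filter_ne']
  simpa only [sdiff_self, bot_eq_empty, prod_empty, one_mul, add_eq_left] using hfull

end Finset

/-- Campbell–Wehlau relation (i): Over a field `k` of
characteristic 2, with `ι` on `k[x₁,y₁,…,x_g,y_g]` given by `xᵢ ↦ xᵢ`,
`yᵢ ↦ yᵢ + xᵢ` and `Tr(f) = f + ι(f)`: for every `D ⊆ {1,…,g}`,
`∑_{L ⊊ D} (∏_{i∈D∖L} xᵢ) · Tr(∏_{j∈L} yⱼ) = 0`.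
Variables: `X (i, false) = xᵢ`, `X (i, true) = yᵢ`. -/
theorem stmt16 (k : Type*) [Field k] [CharP k 2] (g : ℕ)
    (ι : MvPolynomial (Fin g × Bool) k →ₐ[k] MvPolynomial (Fin g × Bool) k)
    (hι : ι = aeval (fun v : Fin g × Bool =>
      if v.2 then X v + X (v.1, false) else X v))
    (Tr : MvPolynomial (Fin g × Bool) k → MvPolynomial (Fin g × Bool) k)
    (hTr : ∀ f, Tr f = f + ι f)
    (D : Finset (Fin g)) :
    ∑ L ∈ D.powerset.filter (· ≠ D),
      (∏ i ∈ D \ L, X (i, false)) * Tr (∏ j ∈ L, X (j, true)) = 0 := by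
  have hTr_y : ∀ L : Finset (Fin g), Tr (∏ j ∈ L, X (j, true)) =
      ∏ j ∈ L, X (j, true) + ∏ j ∈ L, (X (j, true) + X (j, false)) := by
    intro L
    simp [hTr, hι, map_prod]
  simp only [hTr_y]
  exact Finset.sum_ssubset_prod_sdiff_mul_trace (fun i => X (i, false)) (fun j => X (j, true)) D
end

section
/- Let k be a field of characteristic 2 with ι on S = k[x_1,y_1,…,x_g,y_g] given by x_i ↦ x_i, y_i ↦ y_i + x_i. For subsets A, B ⊆ {1,…,g}, the identity Tr(y_A)·Tr(y_B) = ∑_{L ⊊ A∩B} x_{(A∩B)∖L} N(y_L) Tr(y_{(A∪B)∖L}) + N(y_{A∩B}) ∑_{M ⊊ A∖B} x_{(A∖B)∖M} Tr(y_{M ∪ (B∖A)}) holds in S, where x_M = ∏_{i∈M} x_i, y_M = ∏_{i∈M} y_i, N(f) = f·ι(f), Tr(f) = f + ι(f). -/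
/-!
Write `y'ᵢ = ι yᵢ = yᵢ + xᵢ`. In characteristic 2 we have `yᵢ y'ᵢ + xᵢ yᵢ = yᵢ²`,
`yᵢ y'ᵢ + xᵢ y'ᵢ = y'ᵢ²` and `y'ᵢ + xᵢ = yᵢ`, so by the expansion
`∏ (aᵢ + bᵢ) = ∑_L a_L b_{s∖L}` the two sums, taken over *all* subsets, collapse to
`y_C² y_{A∆B} + y'_C² y'_{A∆B}` and `y'_D y_E + y_D y'_E`, where `C = A ∩ B`, `D = A ∖ B`,
`E = B ∖ A`. The two top terms left out of the proper-subset sums are both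
`N(y_C) Tr(y_{A∆B})` and cancel in characteristic 2; what remains is the expansion of
`Tr(y_C y_D) Tr(y_C y_E)`.
-/

open Finset MvPolynomial

lemma Finset.sum_powerset_filter_ne {σ M : Type*} [DecidableEq σ] [AddCommGroup M]
    (s : Finset σ) (f : Finset σ → M) :
    ∑ L ∈ s.powerset.filter (· ≠ s), f L = ∑ L ∈ s.powerset, f L - f s := by
  rw [filter_ne', eq_sub_iff_add_eq, sum_erase_add _ _ (mem_powerset_self s)]

lemma Finset.prod_sdiff_eq_prod_sdiff_mul_prod_sdiff {σ M : Type*} [DecidableEq σ] [CommMonoid M]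
    {L C U : Finset σ} (hLC : L ⊆ C) (hCU : C ⊆ U) (f : σ → M) :
    ∏ i ∈ U \ L, f i = (∏ i ∈ U \ C, f i) * ∏ i ∈ C \ L, f i := by
  rw [← sdiff_sdiff_sdiff_cancel_right hLC, prod_sdiff (sdiff_subset_sdiff hCU le_rfl)]

section ShiftedMonomials

variable {σ R : Type*} [CommRing R] (x y : σ → R)

/-- `Tr(y_s)` for the involution `yᵢ ↦ yᵢ + xᵢ`. -/
def traceMonomial (s : Finset σ) : R := ∏ i ∈ s, y i + ∏ i ∈ s, (y i + x i)

/-- `N(y_s)` for the involution `yᵢ ↦ yᵢ + xᵢ`. -/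
def normMonomial (s : Finset σ) : R := (∏ i ∈ s, y i) * ∏ i ∈ s, (y i + x i)

variable [CharP R 2]

lemma normMonomial_add_self (s : Finset σ) :
    normMonomial x (fun i => y i + x i) s = normMonomial x y s := by
  simp only [normMonomial, CharTwo.add_cancel_right, mul_comm]

lemma sum_powerset_mul_normMonomial_mul_prod_sdiff [DecidableEq σ] (s : Finset σ) :
    ∑ L ∈ s.powerset, (∏ i ∈ s \ L, x i) * normMonomial x y L * ∏ i ∈ s \ L, y i =
      ∏ i ∈ s, y i ^ 2 :=
  calc _ = ∑ L ∈ s.powerset, (∏ i ∈ L, y i * (y i + x i)) * ∏ i ∈ s \ L, x i * y i :=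
        sum_congr rfl fun L _ => by simp only [normMonomial, prod_mul_distrib]; ring
    _ = ∏ i ∈ s, (y i * (y i + x i) + x i * y i) := (prod_add _ _ s).symm
    _ = ∏ i ∈ s, y i ^ 2 := prod_congr rfl fun i _ => by
        linear_combination x i * y i * CharTwo.two_eq_zero (R := R)

lemma sum_powerset_mul_normMonomial_mul_traceMonomial_sdiff [DecidableEq σ]
    {C U : Finset σ} (hCU : C ⊆ U) :
    ∑ L ∈ C.powerset, (∏ i ∈ C \ L, x i) * normMonomial x y L * traceMonomial x y (U \ L) =
      (∏ i ∈ C, y i ^ 2) * ∏ i ∈ U \ C, y i +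
        (∏ i ∈ C, (y i + x i) ^ 2) * ∏ i ∈ U \ C, (y i + x i) := by
  have hsplit : ∀ L ∈ C.powerset, (∏ i ∈ C \ L, x i) * normMonomial x y L *
      traceMonomial x y (U \ L) =
        (∏ i ∈ C \ L, x i) * normMonomial x y L * (∏ i ∈ C \ L, y i) * ∏ i ∈ U \ C, y i +
        (∏ i ∈ C \ L, x i) * normMonomial x (fun i => y i + x i) L *
          (∏ i ∈ C \ L, (y i + x i)) * ∏ i ∈ U \ C, (y i + x i) := fun L hL => by
    rw [normMonomial_add_self, traceMonomial,
      prod_sdiff_eq_prod_sdiff_mul_prod_sdiff (mem_powerset.1 hL) hCU,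
      prod_sdiff_eq_prod_sdiff_mul_prod_sdiff (mem_powerset.1 hL) hCU]
    ring
  rw [sum_congr rfl hsplit, sum_add_distrib, ← sum_mul, ← sum_mul,
    sum_powerset_mul_normMonomial_mul_prod_sdiff,
    sum_powerset_mul_normMonomial_mul_prod_sdiff x (fun i => y i + x i)]

lemma sum_powerset_mul_traceMonomial_union [DecidableEq σ] {D E : Finset σ}
    (hDE : Disjoint D E) :
    ∑ M ∈ D.powerset, (∏ i ∈ D \ M, x i) * traceMonomial x y (M ∪ E) =
      (∏ i ∈ D, (y i + x i)) * ∏ i ∈ E, y i + (∏ i ∈ D, y i) * ∏ i ∈ E, (y i + x i) := by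
  have hsplit : ∀ M ∈ D.powerset, (∏ i ∈ D \ M, x i) * traceMonomial x y (M ∪ E) =
      (∏ i ∈ M, y i) * (∏ i ∈ D \ M, x i) * ∏ i ∈ E, y i +
        (∏ i ∈ M, (y i + x i)) * (∏ i ∈ D \ M, x i) * ∏ i ∈ E, (y i + x i) := fun M hM => by
    have hME := hDE.mono_left (mem_powerset.1 hM)
    rw [traceMonomial, prod_union hME, prod_union hME]
    ring
  rw [sum_congr rfl hsplit, sum_add_distrib, ← sum_mul, ← sum_mul, ← prod_add, ← prod_add]
  simp only [CharTwo.add_cancel_right]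

theorem traceMonomial_mul_traceMonomial [DecidableEq σ] (A B : Finset σ) :
    traceMonomial x y A * traceMonomial x y B =
      (∑ L ∈ (A ∩ B).powerset.filter (· ≠ A ∩ B),
        (∏ i ∈ (A ∩ B) \ L, x i) * normMonomial x y L * traceMonomial x y ((A ∪ B) \ L))
      + normMonomial x y (A ∩ B) *
        ∑ M ∈ (A \ B).powerset.filter (· ≠ A \ B),
          (∏ i ∈ (A \ B) \ M, x i) * traceMonomial x y (M ∪ (B \ A)) := by
  have hDE : Disjoint (A \ B) (B \ A) := disjoint_sdiff_sdiff
  have hsymm : (A ∪ B) \ (A ∩ B) = (A \ B) ∪ (B \ A) := by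
    ext; simp only [mem_union, mem_inter, mem_sdiff]; tauto
  rw [sum_powerset_filter_ne, sum_powerset_filter_ne,
    sum_powerset_mul_normMonomial_mul_traceMonomial_sdiff x y inter_subset_union,
    sum_powerset_mul_traceMonomial_union x y hDE, hsymm]
  simp only [traceMonomial, normMonomial, Finset.sdiff_self, prod_empty, one_mul, prod_pow,
    prod_union hDE]
  rw [← prod_inter_mul_prod_sdiff A B y, ← prod_inter_mul_prod_sdiff A B (fun i => y i + x i),
    ← prod_inter_mul_prod_sdiff B A y, ← prod_inter_mul_prod_sdiff B A (fun i => y i + x i),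
    inter_comm B A]
  linear_combination ((∏ i ∈ A ∩ B, y i) * (∏ i ∈ A ∩ B, (y i + x i)) *
    ((∏ i ∈ A \ B, y i) * (∏ i ∈ B \ A, y i) +
      (∏ i ∈ A \ B, (y i + x i)) * ∏ i ∈ B \ A, (y i + x i))) * CharTwo.two_eq_zero (R := R)

end ShiftedMonomials

/-- Campbell–Wehlau relation (ii): Over a field `k` of
characteristic 2, with `ι` on `k[x₁,y₁,…,x_g,y_g]` given by `xᵢ ↦ xᵢ`,
`yᵢ ↦ yᵢ + xᵢ`, `Tr(f) = f + ι(f)`, `N(f) = f·ι(f)`, and `y_M = ∏_{i∈M} yᵢ`,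
`x_M = ∏_{i∈M} xᵢ`: for all `A, B ⊆ {1,…,g}`,
`Tr(y_A)Tr(y_B) = ∑_{L⊊A∩B} x_{(A∩B)∖L} N(y_L) Tr(y_{(A∪B)∖L})
  + N(y_{A∩B}) ∑_{M⊊A∖B} x_{(A∖B)∖M} Tr(y_{M∪(B∖A)})`.
Variables: `X (i, false) = xᵢ`, `X (i, true) = yᵢ`. -/
theorem stmt17 (k : Type*) [Field k] [CharP k 2] (g : ℕ)
    (ι : MvPolynomial (Fin g × Bool) k →ₐ[k] MvPolynomial (Fin g × Bool) k)
    (hι : ι = aeval (fun v : Fin g × Bool =>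
      if v.2 then X v + X (v.1, false) else X v))
    (Tr N : MvPolynomial (Fin g × Bool) k → MvPolynomial (Fin g × Bool) k)
    (hTr : ∀ f, Tr f = f + ι f) (hN : ∀ f, N f = f * ι f)
    (A B : Finset (Fin g)) :
    Tr (∏ i ∈ A, X (i, true)) * Tr (∏ i ∈ B, X (i, true)) =
      (∑ L ∈ (A ∩ B).powerset.filter (· ≠ A ∩ B),
        (∏ i ∈ (A ∩ B) \ L, X (i, false)) * N (∏ i ∈ L, X (i, true))
          * Tr (∏ i ∈ (A ∪ B) \ L, X (i, true)))
      + N (∏ i ∈ A ∩ B, X (i, true)) *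
        ∑ M ∈ (A \ B).powerset.filter (· ≠ A \ B),
          (∏ i ∈ (A \ B) \ M, X (i, false))
            * Tr (∏ i ∈ M ∪ (B \ A), X (i, true)) := by
  have hιy : ∀ s : Finset (Fin g),
      ι (∏ i ∈ s, X (i, true)) = ∏ i ∈ s, (X (i, true) + X (i, false)) := fun s => by
    simp [hι, map_prod]
  simp only [hTr, hN, hιy]
  exact traceMonomial_mul_traceMonomial (fun i => X (i, false)) (fun i => X (i, true)) A B
end
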